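/- arXiv:math/0304131 — 10 statements merged into one kernel-verified Lean document; each statement's English description precedes it below -/
import Mathlib

section
/- Let F : ℝⁿ → ℝⁿ be a smooth vector field satisfying the linear growth bound ‖F(x)‖ ≤ C(1 + ‖x‖) for all x ∈ ℝⁿ, where C > 0. Then for every t₀ ∈ ℝ and x₀ ∈ ℝⁿ there exists a globally defined C¹ curve x : ℝ → ℝⁿ with x'(t) = F(x(t)) for all t and x(t₀) = x₀; moreover every such solution satisfies the a priori bound ‖x(t)‖ ≤ (1 + ‖x₀‖) e^{C|t − t₀|} − 1 for all t ∈ ℝ. -/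
open Set Real

variable {E : Type*} [NormedAddCommGroup E] [NormedSpace ℝ E]

/-- One-sided Gronwall bound for linear-growth derivative. -/
lemma gron_fwd {C : ℝ} (hC : 0 < C) {y g : ℝ → E} {a b : ℝ}
    (hy : ContinuousOn y (Icc a b))
    (hy' : ∀ t ∈ Ico a b, HasDerivWithinAt y (g t) (Ici t) t)
    (hg : ∀ t ∈ Ico a b, ‖g t‖ ≤ C * (1 + ‖y t‖)) :
    ∀ t ∈ Icc a b, ‖y t‖ ≤ (1 + ‖y a‖) * Real.exp (C * (t - a)) - 1 := by
  intro t ht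
  have h := norm_le_gronwallBound_of_norm_deriv_right_le (δ := ‖y a‖) (K := C) (ε := C)
    hy hy' le_rfl (fun x hx => by
      have := hg x hx
      linarith [this]) t ht
  rw [gronwallBound_of_K_ne_0 hC.ne'] at h
  have hCne : C / C = 1 := div_self hC.ne'
  rw [hCne] at h
  simp only [] at h
  simp only [one_mul] at h
  nlinarith [h]

lemma myIcc_mem {a b t : ℝ} (hat : a ≤ t) (htb : t < b) :
    Icc a b ∈ nhdsWithin t (Ici t) := by
  refine Filter.mem_of_superset
    (Filter.inter_mem self_mem_nhdsWithin
      (mem_nhdsWithin_of_mem_nhds (Iic_mem_nhds htb))) ?_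
  rintro s ⟨hs1, hs2⟩
  exact ⟨le_trans hat hs1, hs2⟩

/-- Two-sided Gronwall bound on `Icc a b` around `t₀`. -/
lemma gron_two {C : ℝ} (hC : 0 < C) {y g : ℝ → E} {a b t₀ : ℝ}
    (ht₀ : t₀ ∈ Icc a b)
    (hy : ContinuousOn y (Icc a b))
    (hy' : ∀ t ∈ Icc a b, HasDerivWithinAt y (g t) (Icc a b) t)
    (hg : ∀ t ∈ Icc a b, ‖g t‖ ≤ C * (1 + ‖y t‖)) :
    ∀ t ∈ Icc a b, ‖y t‖ ≤ (1 + ‖y t₀‖) * Real.exp (C * |t - t₀|) - 1 := by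
  intro t ht
  rcases le_total t₀ t with hle | hle
  · -- forward on Icc t₀ b
    have hsub : Icc t₀ b ⊆ Icc a b := Icc_subset_Icc_left ht₀.1
    have := gron_fwd hC (y := y) (g := g) (a := t₀) (b := b)
      (hy.mono hsub)
      (fun s hs => (hy' s (hsub (Ico_subset_Icc_self hs))).mono_of_mem_nhdsWithin
        (myIcc_mem (le_trans ht₀.1 hs.1) hs.2))
      (fun s hs => hg s (hsub (Ico_subset_Icc_self hs)))
      t ⟨hle, ht.2⟩
    rwa [abs_of_nonneg (by linarith)]
  · -- backward: z s = y (2 t₀ - s) on Icc t₀ (2 t₀ - a)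
    set b' := 2 * t₀ - a with hb'
    have hmap : MapsTo (fun s => 2 * t₀ - s) (Icc t₀ b') (Icc a b) := by
      intro s hs
      constructor <;> [skip; skip] <;> simp only [mem_Icc, hb'] at hs ⊢ <;>
        first
          | linarith [hs.1, hs.2]
          | linarith [hs.1, hs.2, ht₀.1, ht₀.2]
    have hzc : ContinuousOn (fun s => y (2 * t₀ - s)) (Icc t₀ b') :=
      hy.comp ((continuous_const.sub continuous_id).continuousOn) hmap
    have hz' : ∀ s ∈ Ico t₀ b',
        HasDerivWithinAt (fun s => y (2 * t₀ - s)) (-g (2 * t₀ - s)) (Ici s) s := by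
      intro s hs
      have hmem : (2 * t₀ - s) ∈ Icc a b := hmap ⟨hs.1, hs.2.le⟩
      have h1 : HasDerivWithinAt (fun s : ℝ => 2 * t₀ - s) (-1 : ℝ) (Icc t₀ b') s := by
        exact ((hasDerivAt_id' s).const_sub (2*t₀)).hasDerivWithinAt
      have h2 := (hy' _ hmem).scomp s h1 hmap
      simp only [neg_one_smul] at h2
      exact h2.mono_of_mem_nhdsWithin (myIcc_mem hs.1 hs.2)
    have hzg : ∀ s ∈ Ico t₀ b', ‖-g (2 * t₀ - s)‖ ≤ C * (1 + ‖y (2 * t₀ - s)‖) := by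
      intro s hs
      rw [norm_neg]
      exact hg _ (hmap ⟨hs.1, hs.2.le⟩)
    have := gron_fwd hC hzc hz' hzg (2 * t₀ - t) ⟨by linarith, by simp only [hb']; linarith [ht.1]⟩
    rw [show 2 * t₀ - (2 * t₀ - t) = t by ring, show 2 * t₀ - t₀ = t₀ by ring,
      show 2 * t₀ - t - t₀ = -(t - t₀) by ring] at this
    rw [abs_of_nonpos (by linarith)]
    exact this

open Metric in
open scoped NNReal in
lemma lipOnBall [FiniteDimensional ℝ E] {F : E → E} (hF : ContDiff ℝ (⊤ : ℕ∞) F) (R : ℝ) :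
    ∃ K : ℝ≥0, LipschitzOnWith K F (closedBall (0:E) R) := by
  have hcont : ContinuousOn (fderiv ℝ F) (closedBall (0:E) R) :=
    (hF.continuous_fderiv (by simp)).continuousOn
  obtain ⟨M, hM⟩ := (isCompact_closedBall (0:E) R).exists_bound_of_continuousOn hcont
  refine ⟨M.toNNReal, Convex.lipschitzOnWith_of_nnnorm_fderiv_le
    (fun x _ => (hF.differentiable (by simp)).differentiableAt) ?_ (convex_closedBall _ _)⟩
  intro x hx
  rw [← NNReal.coe_le_coe, coe_nnnorm, Real.coe_toNNReal']
  exact le_max_of_le_left (hM x hx)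

open Metric in
open scoped NNReal in
lemma sol [FiniteDimensional ℝ E] [CompleteSpace E] {C : ℝ} (hC : 0 < C) {F : E → E}
    (hF : ContDiff ℝ (⊤ : ℕ∞) F) (hgrowth : ∀ x, ‖F x‖ ≤ C * (1 + ‖x‖))
    (t₀ : ℝ) (x₀ : E) (T : ℝ) (hT : 0 < T) :
    ∃ y : ℝ → E, y t₀ = x₀ ∧ ∀ t ∈ Ioo (t₀ - T) (t₀ + T),
      HasDerivAt y (F (y t)) t ∧ ‖y t‖ ≤ (1 + ‖x₀‖) * Real.exp (C * |t - t₀|) - 1 := by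
  set R : ℝ := (1 + ‖x₀‖) * Real.exp (C * T) with hR
  have hR1 : 1 + ‖x₀‖ ≤ R := by
    nlinarith [Real.one_le_exp (by positivity : (0:ℝ) ≤ C * T), norm_nonneg x₀]
  have hRpos : 0 < R := by nlinarith [norm_nonneg x₀]
  set bump : ContDiffBump (0 : E) := ⟨R, R + 1, hRpos, by linarith⟩ with hbump
  set G : E → E := fun x => bump x • F x with hG
  have hGsmooth : ContDiff ℝ 1 G := (bump.contDiff).smul (hF.of_le (by simp))
  have hGF : ∀ x : E, ‖x‖ ≤ R → G x = F x := by
    intro x hx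
    have : bump x = 1 := bump.one_of_mem_closedBall (by simpa [dist_zero_right] using hx)
    simp [hG, this]
  have hGgrowth : ∀ x, ‖G x‖ ≤ C * (1 + ‖x‖) := by
    intro x
    have h1 : ‖G x‖ ≤ ‖F x‖ := by
      rw [hG]
      simp only [norm_smul, Real.norm_of_nonneg bump.nonneg]
      nlinarith [bump.le_one (x := x), norm_nonneg (F x), bump.nonneg (x := x)]
    exact h1.trans (hgrowth x)
  have hsupp : HasCompactSupport G := by
    have := bump.hasCompactSupport.smul_right (f' := F)
    exact this
  obtain ⟨M, hM⟩ := hsupp.exists_bound_of_continuous hGsmooth.continuous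
  set C' : ℝ := max M 0 with hC'
  have hMC' : ∀ x, ‖G x‖ ≤ C' := fun x => (hM x).trans (le_max_left _ _)
  -- global Lipschitz constant for G
  have hfderiv : ∃ K : ℝ≥0, LipschitzWith K G := by
    obtain ⟨M₂, hM₂⟩ := (hsupp.fderiv ℝ).exists_bound_of_continuous
      (hGsmooth.continuous_fderiv one_ne_zero)
    refine ⟨M₂.toNNReal, lipschitzWith_of_nnnorm_fderiv_le (hGsmooth.differentiable one_ne_zero) ?_⟩
    intro x
    rw [← NNReal.coe_le_coe, coe_nnnorm, Real.coe_toNNReal']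
    exact le_max_of_le_left (hM₂ x)
  obtain ⟨K, hK⟩ := hfderiv
  have hPL : IsPicardLindelof (fun _ : ℝ => G) (tmin := t₀ - T) (tmax := t₀ + T)
      ⟨t₀, ⟨by linarith, by linarith⟩⟩ x₀ (C' * T).toNNReal 0 C'.toNNReal K :=
    IsPicardLindelof.of_time_independent
      (fun x _ => by rw [Real.coe_toNNReal _ (le_max_right _ _)]; exact hMC' x)
      hK.lipschitzOnWith (by
        show ((C'.toNNReal : ℝ)) * max (t₀ + T - t₀) (t₀ - (t₀ - T)) ≤
          ((C' * T).toNNReal : ℝ) - ((0 : ℝ≥0) : ℝ)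
        rw [Real.coe_toNNReal _ (le_max_right _ _),
          Real.coe_toNNReal _ (mul_nonneg (le_max_right _ _) hT.le), NNReal.coe_zero, sub_zero,
          show t₀ + T - t₀ = T by ring, show t₀ - (t₀ - T) = T by ring, max_self])
  obtain ⟨y, hy0, hy⟩ : ∃ y : ℝ → E, y t₀ = x₀ ∧ ∀ t ∈ Icc (t₀ - T) (t₀ + T),
      HasDerivWithinAt y (G (y t)) (Icc (t₀ - T) (t₀ + T)) t :=
    hPL.exists_eq_forall_mem_Icc_hasDerivWithinAt₀
  have hbound : ∀ t ∈ Icc (t₀ - T) (t₀ + T),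
      ‖y t‖ ≤ (1 + ‖x₀‖) * Real.exp (C * |t - t₀|) - 1 := by
    have := gron_two hC (y := y) (g := fun t => G (y t)) (a := t₀ - T) (b := t₀ + T) (t₀ := t₀)
      ⟨by linarith, by linarith⟩
      (fun t ht => (hy t ht).continuousWithinAt)
      hy
      (fun t _ => hGgrowth (y t))
    rwa [hy0] at this
  refine ⟨y, hy0, fun t ht => ?_⟩
  have ht' : t ∈ Icc (t₀ - T) (t₀ + T) := Ioo_subset_Icc_self ht
  have hyR : ‖y t‖ ≤ R := by
    have h1 := hbound t ht'
    have h2 : |t - t₀| ≤ T := by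
      rw [abs_le]; constructor <;> [linarith [ht'.1]; linarith [ht'.2]]
    have h3 : Real.exp (C * |t - t₀|) ≤ Real.exp (C * T) :=
      Real.exp_le_exp.2 (by nlinarith [abs_nonneg (t - t₀)])
    nlinarith [norm_nonneg x₀]
  refine ⟨?_, hbound t ht'⟩
  have := (hy t ht').hasDerivAt (Icc_mem_nhds ht.1 ht.2)
  rwa [hGF (y t) hyR] at this

/-- Existence step of Theorem 3.1: global solvability of the autonomous ODE
`ẋ = F(x)` under a linear growth hypothesis, together with the Gronwall-type
a priori exponential bound for every global solution. -/
theorem stmt_0 (n : ℕ) (F : (Fin n → ℝ) → (Fin n → ℝ)) (C : ℝ) (hC : 0 < C)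
    (hF : ContDiff ℝ (⊤ : ℕ∞) F) (hgrowth : ∀ x, ‖F x‖ ≤ C * (1 + ‖x‖)) :
    ∀ (t₀ : ℝ) (x₀ : Fin n → ℝ),
      (∃ x : ℝ → (Fin n → ℝ), (∀ t, HasDerivAt x (F (x t)) t) ∧ x t₀ = x₀) ∧
      (∀ x : ℝ → (Fin n → ℝ), (∀ t, HasDerivAt x (F (x t)) t) → x t₀ = x₀ →
        ∀ t, ‖x t‖ ≤ (1 + ‖x₀‖) * Real.exp (C * |t - t₀|) - 1) := by
  intro t₀ x₀
  constructor
  · -- existence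
    have hsol : ∀ m : ℕ, ∃ y : ℝ → (Fin n → ℝ), y t₀ = x₀ ∧
        ∀ t ∈ Ioo (t₀ - ((m:ℝ)+1)) (t₀ + ((m:ℝ)+1)),
          HasDerivAt y (F (y t)) t ∧ ‖y t‖ ≤ (1 + ‖x₀‖) * Real.exp (C * |t - t₀|) - 1 :=
      fun m => sol hC hF hgrowth t₀ x₀ ((m:ℝ)+1) (by positivity)
    set Y : ℕ → ℝ → (Fin n → ℝ) := fun m => (hsol m).choose with hYdef
    have hY0 : ∀ m, Y m t₀ = x₀ := fun m => (hsol m).choose_spec.1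
    have hY : ∀ (m : ℕ), ∀ t ∈ Ioo (t₀ - ((m:ℝ)+1)) (t₀ + ((m:ℝ)+1)),
        HasDerivAt (Y m) (F (Y m t)) t ∧ ‖Y m t‖ ≤ (1 + ‖x₀‖) * Real.exp (C * |t - t₀|) - 1 :=
      fun m => (hsol m).choose_spec.2
    -- consistency
    have hcons : ∀ m k : ℕ, m ≤ k →
        ∀ t ∈ Ioo (t₀ - ((m:ℝ)+1)) (t₀ + ((m:ℝ)+1)), Y m t = Y k t := by
      intro m k hmk
      set Rk : ℝ := (1 + ‖x₀‖) * Real.exp (C * ((k:ℝ)+1)) with hRk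
      obtain ⟨K, hK⟩ := lipOnBall hF Rk
      have hmk' : ((m:ℝ)+1) ≤ ((k:ℝ)+1) := by
        have : (m:ℝ) ≤ (k:ℝ) := Nat.cast_le.2 hmk
        linarith
      have hsub : Ioo (t₀ - ((m:ℝ)+1)) (t₀ + ((m:ℝ)+1)) ⊆
          Ioo (t₀ - ((k:ℝ)+1)) (t₀ + ((k:ℝ)+1)) :=
        Ioo_subset_Ioo (by linarith) (by linarith)
      have hmemball : ∀ (j : ℕ) (t : ℝ), t ∈ Ioo (t₀ - ((j:ℝ)+1)) (t₀ + ((j:ℝ)+1)) →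
          ((j:ℝ)+1) ≤ ((k:ℝ)+1) → Y j t ∈ Metric.closedBall (0 : Fin n → ℝ) Rk := by
        intro j t ht hjk
        rw [Metric.mem_closedBall, dist_zero_right]
        have h1 := (hY j t ht).2
        have h2 : |t - t₀| ≤ (k:ℝ)+1 := by
          rw [abs_le]; constructor <;> [linarith [ht.1]; linarith [ht.2]]
        have h3 : Real.exp (C * |t - t₀|) ≤ Real.exp (C * ((k:ℝ)+1)) :=
          Real.exp_le_exp.2 (by nlinarith [abs_nonneg (t - t₀)])
        have h4 := mul_le_mul_of_nonneg_left h3 (by positivity : (0:ℝ) ≤ 1 + ‖x₀‖)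
        rw [hRk]
        linarith
      exact ODE_solution_unique_of_mem_Ioo
        (v := fun _ => F) (s := fun _ => Metric.closedBall (0 : Fin n → ℝ) Rk)
        (fun _ _ => hK)
        (show t₀ ∈ Ioo (t₀ - ((m:ℝ)+1)) (t₀ + ((m:ℝ)+1)) from ⟨by linarith, by linarith⟩)
        (fun t ht => ⟨(hY m t ht).1, hmemball m t ht hmk'⟩)
        (fun t ht => ⟨(hY k t (hsub ht)).1, hmemball k t (hsub ht) le_rfl⟩)
        ((hY0 m).trans (hY0 k).symm)
    set x : ℝ → (Fin n → ℝ) := fun t => Y ⌊|t - t₀|⌋₊ t with hxdef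
    have hmemIoo : ∀ s : ℝ, s ∈ Ioo (t₀ - ((⌊|s - t₀|⌋₊:ℝ)+1)) (t₀ + ((⌊|s - t₀|⌋₊:ℝ)+1)) := by
      intro s
      have h := abs_lt.1 (show |s - t₀| < (⌊|s - t₀|⌋₊:ℝ)+1 by
        exact_mod_cast Nat.lt_floor_add_one |s - t₀|)
      exact ⟨by linarith [h.1], by linarith [h.2]⟩
    have hxeq : ∀ (m : ℕ) (s : ℝ), s ∈ Ioo (t₀ - ((m:ℝ)+1)) (t₀ + ((m:ℝ)+1)) → x s = Y m s := by
      intro m s hs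
      rcases le_total (⌊|s - t₀|⌋₊) m with h | h
      · exact hcons _ m h s (hmemIoo s)
      · exact (hcons m _ h s hs).symm
    refine ⟨x, fun t => ?_, ?_⟩
    · set m := ⌊|t - t₀|⌋₊ with hm
      have hOpen : Ioo (t₀ - ((m:ℝ)+1)) (t₀ + ((m:ℝ)+1)) ∈ nhds t :=
        Ioo_mem_nhds (hmemIoo t).1 (hmemIoo t).2
      have hev : x =ᶠ[nhds t] Y m :=
        Filter.eventuallyEq_of_mem hOpen (fun s hs => hxeq m s hs)
      have hd := ((hY m t (hmemIoo t)).1).congr_of_eventuallyEq hev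
      rwa [← hxeq m t (hmemIoo t)] at hd
    · show Y ⌊|t₀ - t₀|⌋₊ t₀ = x₀
      simpa using hY0 _
  · -- a priori bound
    intro x hx hx0 t
    set T : ℝ := |t - t₀| + 1 with hT
    have hTpos : 0 < T := by positivity
    have := gron_two hC (y := x) (g := fun s => F (x s)) (a := t₀ - T) (b := t₀ + T) (t₀ := t₀)
      ⟨by linarith, by linarith⟩
      (fun s _ => (hx s).continuousAt.continuousWithinAt)
      (fun s _ => (hx s).hasDerivWithinAt)
      (fun s _ => hgrowth (x s))
      t ⟨by linarith [abs_lt.1 (lt_of_le_of_lt (le_refl |t-t₀|) (lt_add_one _))],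
         by linarith [abs_lt.1 (lt_of_le_of_lt (le_refl |t-t₀|) (lt_add_one _))]⟩
    rwa [hx0] at this
end

section
/- Let n ∈ ℕ, t₀ ∈ ℝ, T > 0, C > 0 and let K ⊆ ℝⁿ be a compact convex set. For each ε ∈ (0,1) let F_ε : ℝⁿ → ℝⁿ be a C¹ map with sup_{x ∈ K} ‖DF_ε(x)‖ ≤ C·|log ε|, and let x_ε, y_ε : [t₀ − T, t₀ + T] → K be C¹ curves with x_ε'(t) = F_ε(x_ε(t)) and y_ε'(t) = F_ε(y_ε(t)) + n_ε(t) for all t, where n_ε : [t₀ − T, t₀ + T] → ℝⁿ is continuous. Assume that for every m ∈ ℕ there are C_m > 0 and ε_m ∈ (0,1) such that ‖x_ε(t₀) − y_ε(t₀)‖ ≤ C_m ε^m and sup_{|t−t₀| ≤ T} ‖n_ε(t)‖ ≤ C_m ε^m for all ε < ε_m. Then for every m ∈ ℕ there are C'_m > 0 and ε'_m ∈ (0,1) such that sup_{|t−t₀| ≤ T} ‖x_ε(t) − y_ε(t)‖ ≤ C'_m ε^m for all ε < ε'_m. -/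
open Set

private lemma exp_sub_one_le {y : ℝ} (hy : 0 ≤ y) : Real.exp y - 1 ≤ y * Real.exp y := by
  have h := Real.add_one_le_exp (-y)
  have hp := Real.exp_pos y
  rw [Real.exp_neg] at h
  have h2 := mul_le_mul_of_nonneg_right h hp.le
  rw [inv_mul_cancel₀ hp.ne'] at h2
  nlinarith

/-- One-sided Gronwall estimate on an interval. -/
private lemma gron_fwd_s1 {E : Type*} [NormedAddCommGroup E] [NormedSpace ℝ E]
    {f f' : ℝ → E} {a b L M δ : ℝ} (hL : 0 < L) (hM : 0 ≤ M) (hδ : ‖f a‖ ≤ δ)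
    (hf : ∀ t ∈ Icc a b, HasDerivWithinAt f (f' t) (Icc a b) t)
    (hb : ∀ t ∈ Icc a b, ‖f' t‖ ≤ L * ‖f t‖ + M) :
    ∀ t ∈ Icc a b, ‖f t‖ ≤ (δ + M * (b - a)) * Real.exp (L * (b - a)) := by
  intro t ht
  have hab : a ≤ b := le_trans ht.1 ht.2
  have hcont : ContinuousOn f (Icc a b) := fun s hs => (hf s hs).continuousWithinAt
  have hf' : ∀ s ∈ Ico a b, HasDerivWithinAt f (f' s) (Ici s) s := fun s hs =>
    (hf s ⟨hs.1, hs.2.le⟩).mono_of_mem_nhdsWithin (Icc_mem_nhdsGE_of_mem hs)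
  have hbd : ∀ s ∈ Ico a b, ‖f' s‖ ≤ L * ‖f s‖ + M := fun s hs => hb s ⟨hs.1, hs.2.le⟩
  have H := norm_le_gronwallBound_of_norm_deriv_right_le hcont hf' hδ hbd t ht
  rw [gronwallBound_of_K_ne_0 hL.ne'] at H
  refine H.trans ?_
  have hδ0 : 0 ≤ δ := le_trans (norm_nonneg _) hδ
  have hs0 : 0 ≤ t - a := sub_nonneg.2 ht.1
  have hsB : t - a ≤ b - a := by linarith [ht.2]
  have hexp : Real.exp (L * (t - a)) ≤ Real.exp (L * (b - a)) :=
    Real.exp_le_exp.2 (by nlinarith)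
  have hkey : Real.exp (L * (b - a)) - 1 ≤ L * (b - a) * Real.exp (L * (b - a)) :=
    exp_sub_one_le (mul_nonneg hL.le (by linarith))
  have h1 : δ * Real.exp (L * (t - a)) ≤ δ * Real.exp (L * (b - a)) :=
    mul_le_mul_of_nonneg_left hexp hδ0
  have h2 : M / L * (Real.exp (L * (t - a)) - 1) ≤ M * (b - a) * Real.exp (L * (b - a)) := by
    have : M / L * (Real.exp (L * (t - a)) - 1) ≤ M / L * (L * (b - a) * Real.exp (L * (b - a))) := by
      apply mul_le_mul_of_nonneg_left _ (by positivity)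
      linarith
    calc M / L * (Real.exp (L * (t - a)) - 1)
        ≤ M / L * (L * (b - a) * Real.exp (L * (b - a))) := this
      _ = M * (b - a) * Real.exp (L * (b - a)) := by field_simp
  calc δ * Real.exp (L * (t - a)) + M / L * (Real.exp (L * (t - a)) - 1)
      ≤ δ * Real.exp (L * (b - a)) + M * (b - a) * Real.exp (L * (b - a)) := by linarith
    _ = (δ + M * (b - a)) * Real.exp (L * (b - a)) := by ring

/-- Uniqueness step of Theorem 3.1: if the gradients of a net of C¹ right-hand
sides `F_ε` are bounded by `C|log ε|` on a compact convex set `K`, then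
negligible perturbations of initial data and right-hand side produce solutions
differing by `O(ε^m)` for every `m`, uniformly on the compact time interval. -/
theorem stmt_1 (n : ℕ) (t₀ T C : ℝ) (hT : 0 < T) (hC : 0 < C)
    (K : Set (Fin n → ℝ)) (hKcpt : IsCompact K) (hKconv : Convex ℝ K)
    (F : ℝ → (Fin n → ℝ) → (Fin n → ℝ))
    (x y : ℝ → ℝ → (Fin n → ℝ)) (nn : ℝ → ℝ → (Fin n → ℝ))
    (hF : ∀ ε ∈ Ioo (0:ℝ) 1, ContDiff ℝ 1 (F ε))
    (hDF : ∀ ε ∈ Ioo (0:ℝ) 1, ∀ z ∈ K, ‖fderiv ℝ (F ε) z‖ ≤ C * |Real.log ε|)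
    (hxK : ∀ ε ∈ Ioo (0:ℝ) 1, ∀ t ∈ Icc (t₀ - T) (t₀ + T), x ε t ∈ K)
    (hyK : ∀ ε ∈ Ioo (0:ℝ) 1, ∀ t ∈ Icc (t₀ - T) (t₀ + T), y ε t ∈ K)
    (hx : ∀ ε ∈ Ioo (0:ℝ) 1, ∀ t ∈ Icc (t₀ - T) (t₀ + T),
      HasDerivWithinAt (x ε) (F ε (x ε t)) (Icc (t₀ - T) (t₀ + T)) t)
    (hy : ∀ ε ∈ Ioo (0:ℝ) 1, ∀ t ∈ Icc (t₀ - T) (t₀ + T),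
      HasDerivWithinAt (y ε) (F ε (y ε t) + nn ε t) (Icc (t₀ - T) (t₀ + T)) t)
    (hncont : ∀ ε ∈ Ioo (0:ℝ) 1, ContinuousOn (nn ε) (Icc (t₀ - T) (t₀ + T)))
    (hsmall : ∀ m : ℕ, ∃ Cm > (0:ℝ), ∃ εm ∈ Ioo (0:ℝ) 1, ∀ ε ∈ Ioo (0:ℝ) 1, ε < εm →
      ‖x ε t₀ - y ε t₀‖ ≤ Cm * ε ^ m ∧
      ∀ t ∈ Icc (t₀ - T) (t₀ + T), ‖nn ε t‖ ≤ Cm * ε ^ m) :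
    ∀ m : ℕ, ∃ Cm' > (0:ℝ), ∃ εm' ∈ Ioo (0:ℝ) 1, ∀ ε ∈ Ioo (0:ℝ) 1, ε < εm' →
      ∀ t ∈ Icc (t₀ - T) (t₀ + T), ‖x ε t - y ε t‖ ≤ Cm' * ε ^ m := by
  intro m
  set k : ℕ := m + ⌈C * T⌉₊ with hk
  obtain ⟨Cm, hCm, εm, hεm, hsm⟩ := hsmall k
  refine ⟨Cm * (1 + T), by positivity, εm, hεm, ?_⟩
  intro ε hε hεεm t ht
  obtain ⟨hε0, hε1⟩ := hε
  obtain ⟨hinit, hnbd⟩ := hsm ε ⟨hε0, hε1⟩ hεεm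
  set L : ℝ := C * |Real.log ε| with hL
  have hlogneg : Real.log ε < 0 := Real.log_neg hε0 hε1
  have hLpos : 0 < L := mul_pos hC (abs_pos.2 hlogneg.ne)
  set M : ℝ := Cm * ε ^ k with hM
  have hMpos : 0 < M := by positivity
  set g : ℝ → (Fin n → ℝ) := fun s => x ε s - y ε s with hg
  set g' : ℝ → (Fin n → ℝ) := fun s => F ε (x ε s) - (F ε (y ε s) + nn ε s) with hg'
  have hsub1 : t₀ - T ≤ t₀ := by linarith
  have hsub2 : t₀ ≤ t₀ + T := by linarith
  have hIcc : Icc t₀ (t₀ + T) ⊆ Icc (t₀ - T) (t₀ + T) := Icc_subset_Icc hsub1 le_rfl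
  have hderiv : ∀ s ∈ Icc (t₀ - T) (t₀ + T), HasDerivWithinAt g (g' s) (Icc (t₀ - T) (t₀ + T)) s :=
    fun s hs => (hx ε ⟨hε0, hε1⟩ s hs).sub (hy ε ⟨hε0, hε1⟩ s hs)
  have hbound : ∀ s ∈ Icc (t₀ - T) (t₀ + T), ‖g' s‖ ≤ L * ‖g s‖ + M := by
    intro s hs
    have hdiff : ∀ z ∈ K, DifferentiableAt ℝ (F ε) z := fun z _ =>
      (hF ε ⟨hε0, hε1⟩).differentiable one_ne_zero z
    have hmvt := hKconv.norm_image_sub_le_of_norm_fderiv_le hdiff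
      (hDF ε ⟨hε0, hε1⟩) (hyK ε ⟨hε0, hε1⟩ s hs) (hxK ε ⟨hε0, hε1⟩ s hs)
    have hn := hnbd s hs
    calc ‖F ε (x ε s) - (F ε (y ε s) + nn ε s)‖
        = ‖(F ε (x ε s) - F ε (y ε s)) + (-nn ε s)‖ := by ring_nf
      _ ≤ ‖F ε (x ε s) - F ε (y ε s)‖ + ‖-nn ε s‖ := norm_add_le _ _
      _ ≤ L * ‖x ε s - y ε s‖ + M := by
          rw [norm_neg]; exact add_le_add hmvt hn
  -- forward estimate on [t₀, t₀ + T]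
  have hfwd : ∀ s ∈ Icc t₀ (t₀ + T), ‖g s‖ ≤ (M + M * T) * Real.exp (L * T) := by
    have := gron_fwd_s1 (f := g) (f' := g') (a := t₀) (b := t₀ + T) hLpos hMpos.le
      hinit (fun s hs => (hderiv s (hIcc hs)).mono hIcc)
      (fun s hs => hbound s (hIcc hs))
    intro s hs
    have h := this s hs
    simpa [add_sub_cancel_left] using h
  -- backward estimate via reflection
  have hbwd : ∀ s ∈ Icc t₀ (t₀ + T), ‖g (2 * t₀ - s)‖ ≤ (M + M * T) * Real.exp (L * T) := by
    have hmaps : MapsTo (fun s : ℝ => 2 * t₀ - s) (Icc t₀ (t₀ + T)) (Icc (t₀ - T) (t₀ + T)) := by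
      intro s hs
      constructor
      · show t₀ - T ≤ 2 * t₀ - s; linarith [hs.2]
      · show 2 * t₀ - s ≤ t₀ + T; linarith [hs.1]
    have hderiv2 : ∀ s ∈ Icc t₀ (t₀ + T),
        HasDerivWithinAt (fun s => g (2 * t₀ - s)) (-(g' (2 * t₀ - s))) (Icc t₀ (t₀ + T)) s := by
      intro s hs
      have hu : (2 * t₀ - s) ∈ Icc (t₀ - T) (t₀ + T) := hmaps hs
      have hinner : HasDerivWithinAt (fun s : ℝ => 2 * t₀ - s) (-1 : ℝ) (Icc t₀ (t₀ + T)) s := by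
        simpa using ((hasDerivAt_id s).const_sub (2 * t₀)).hasDerivWithinAt
      have hcomp := (hderiv _ hu).scomp_of_eq s hinner hmaps rfl
      simpa [neg_one_smul, Function.comp_def] using hcomp
    have := gron_fwd_s1 (f := fun s => g (2 * t₀ - s)) (f' := fun s => -(g' (2 * t₀ - s)))
      (a := t₀) (b := t₀ + T) hLpos hMpos.le
      (by show ‖g (2 * t₀ - t₀)‖ ≤ M; rw [show 2 * t₀ - t₀ = t₀ by ring]; exact hinit) hderiv2
      (fun s hs => by
        simpa [norm_neg] using hbound (2 * t₀ - s) (hmaps hs))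
    intro s hs
    have h := this s hs
    simpa [add_sub_cancel_left] using h
  have hglobal : ‖g t‖ ≤ (M + M * T) * Real.exp (L * T) := by
    rcases le_total t₀ t with h | h
    · exact hfwd t ⟨h, ht.2⟩
    · have : t = 2 * t₀ - (2 * t₀ - t) := by ring
      rw [this]
      exact hbwd (2 * t₀ - t) ⟨by linarith, by linarith [ht.1]⟩
  -- numeric estimate
  have hkey : (ε : ℝ) ^ k * Real.exp (L * T) ≤ ε ^ m := by
    have hlog : |Real.log ε| = -Real.log ε := abs_of_neg hlogneg
    have hexp : Real.exp (L * T) = ε ^ (-(C * T)) := by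
      rw [Real.rpow_def_of_pos hε0, hL, hlog]; ring_nf
    rw [hexp, ← Real.rpow_natCast ε k, ← Real.rpow_add hε0, ← Real.rpow_natCast ε m]
    apply Real.rpow_le_rpow_of_exponent_ge hε0 hε1.le
    have hceil := Nat.le_ceil (C * T)
    have : (k : ℝ) = m + ⌈C * T⌉₊ := by push_cast [hk]; ring
    rw [this]; linarith
  calc ‖x ε t - y ε t‖ = ‖g t‖ := rfl
    _ ≤ (M + M * T) * Real.exp (L * T) := hglobal
    _ = Cm * (1 + T) * (ε ^ k * Real.exp (L * T)) := by rw [hM]; ring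
    _ ≤ Cm * (1 + T) * ε ^ m := by
        apply mul_le_mul_of_nonneg_left hkey (by positivity)
end

section
/- Fix a mollifier ρ ∈ C_c^∞(ℝ) with ρ ≥ 0, supp ρ ⊆ [−1,1] and ∫ρ = 1; for ε ∈ (0,1) set σ(ε) = 1/|log ε|, ρ_{σ(ε)}(x) = σ(ε)^{-1} ρ(x/σ(ε)) and H_ε(x) = ∫_{−∞}^x ρ_{σ(ε)}(s) ds. Let α₀ ∈ (−π/2, π/2) and for each ε ∈ (0,1) let γ_ε : ℝ → ℝ be the solution of γ_ε'(t) = H_ε(γ_ε(t) + π/2) − H_ε(γ_ε(t) − π/2) with γ_ε(0) = α₀. Then for every t ∈ ℝ, γ_ε(t) → max(−π/2, min(π/2, α₀ + t)) as ε → 0⁺; that is, the limit equals −π/2 for t ≤ −α₀ − π/2, equals α₀ + t for −α₀ − π/2 ≤ t ≤ −α₀ + π/2, and equals π/2 for t ≥ −α₀ + π/2. -/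
open Set Filter Real

/-- The scaling function `σ(ε) = 1/|log ε|`. -/
noncomputable def sigmaScale (ε : ℝ) : ℝ := 1 / |Real.log ε|

/-- The regularized Heaviside function
`H_ε(x) = ∫_{-∞}^x σ(ε)⁻¹ ρ(s/σ(ε)) ds`. -/
noncomputable def Heps (ρ : ℝ → ℝ) (ε x : ℝ) : ℝ :=
  ∫ s in Set.Iic x, (sigmaScale ε)⁻¹ * ρ (s / sigmaScale ε)


open Set Filter Real MeasureTheory

lemma heps_mono (ρ : ℝ → ℝ) (hρc : Continuous ρ) (hρcpt : HasCompactSupport ρ)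
    (hρnonneg : ∀ x, 0 ≤ ρ x) (ε : ℝ) (hσ : 0 < sigmaScale ε) :
    Monotone (Heps ρ ε) := by
  set σ := sigmaScale ε with hσdef
  have hint : Integrable (fun s : ℝ => σ⁻¹ * ρ (s / σ)) :=
    ((hρc.integrable_of_hasCompactSupport hρcpt).comp_div hσ.ne').const_mul σ⁻¹
  intro x y hxy
  exact setIntegral_mono_set hint.integrableOn
    (Filter.Eventually.of_forall fun s => mul_nonneg (by positivity) (hρnonneg _))
    ((Iic_subset_Iic.2 hxy).eventuallyLE)

lemma heps_zero (ρ : ℝ → ℝ) (hρsupp : Function.support ρ ⊆ Icc (-1) 1)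
    (ε : ℝ) (hσ : 0 < sigmaScale ε) {x : ℝ} (hx : x ≤ -sigmaScale ε) :
    Heps ρ ε x = 0 := by
  set σ := sigmaScale ε with hσdef
  have h0 : ∀ s ∈ Iio x, (σ⁻¹ * ρ (s / σ)) = (0:ℝ) := by
    intro s hs
    have hs' : s / σ < -1 := by
      rw [div_lt_iff₀ hσ]
      have : s < -σ := lt_of_lt_of_le hs hx
      linarith
    have : ρ (s / σ) = 0 := by
      by_contra h
      have := hρsupp (Function.mem_support.2 h)
      exact absurd this.1 (by linarith)
    rw [this, mul_zero]
  calc Heps ρ ε x = ∫ s in Iio x, σ⁻¹ * ρ (s / σ) :=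
        (setIntegral_congr_set Iio_ae_eq_Iic).symm
    _ = 0 := by
        rw [setIntegral_congr_fun measurableSet_Iio h0, integral_zero]

lemma heps_one (ρ : ℝ → ℝ) (hρc : Continuous ρ) (hρcpt : HasCompactSupport ρ)
    (hρsupp : Function.support ρ ⊆ Icc (-1) 1) (hρint : ∫ x, ρ x = 1)
    (ε : ℝ) (hσ : 0 < sigmaScale ε) {x : ℝ} (hx : sigmaScale ε ≤ x) :
    Heps ρ ε x = 1 := by
  set σ := sigmaScale ε with hσdef
  have hint : Integrable (fun s : ℝ => σ⁻¹ * ρ (s / σ)) :=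
    ((hρc.integrable_of_hasCompactSupport hρcpt).comp_div hσ.ne').const_mul σ⁻¹
  have htot : ∫ s : ℝ, σ⁻¹ * ρ (s / σ) = 1 := by
    rw [MeasureTheory.integral_const_mul, MeasureTheory.Measure.integral_comp_div ρ σ,
      smul_eq_mul, hρint, abs_of_pos hσ]
    field_simp
  have h0 : ∀ s ∈ Ioi x, (σ⁻¹ * ρ (s / σ)) = (0:ℝ) := by
    intro s hs
    have hs' : (1:ℝ) < s / σ := by
      rw [lt_div_iff₀ hσ]
      have : σ < s := lt_of_le_of_lt hx hs
      linarith
    have : ρ (s / σ) = 0 := by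
      by_contra h
      have := hρsupp (Function.mem_support.2 h)
      exact absurd this.2 (by linarith)
    rw [this, mul_zero]
  have hIoi : ∫ s in Ioi x, σ⁻¹ * ρ (s / σ) = 0 := by
    rw [setIntegral_congr_fun measurableSet_Ioi h0, integral_zero]
  have := intervalIntegral.integral_Iic_add_Ioi (b := x)
    (f := fun s : ℝ => σ⁻¹ * ρ (s / σ)) hint.integrableOn hint.integrableOn
  rw [hIoi, add_zero] at this
  rw [Heps, this, htot]

lemma heps_nonneg (ρ : ℝ → ℝ) (hρnonneg : ∀ x, 0 ≤ ρ x) (ε : ℝ) (hσ : 0 < sigmaScale ε)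
    (x : ℝ) : 0 ≤ Heps ρ ε x :=
  setIntegral_nonneg measurableSet_Iic fun s _ => mul_nonneg (by positivity) (hρnonneg _)

lemma heps_le_one (ρ : ℝ → ℝ) (hρc : Continuous ρ) (hρcpt : HasCompactSupport ρ)
    (hρnonneg : ∀ x, 0 ≤ ρ x) (hρsupp : Function.support ρ ⊆ Icc (-1) 1)
    (hρint : ∫ x, ρ x = 1) (ε : ℝ) (hσ : 0 < sigmaScale ε) (x : ℝ) :
    Heps ρ ε x ≤ 1 := by
  have := heps_mono ρ hρc hρcpt hρnonneg ε hσ (le_max_left x (sigmaScale ε))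
  rwa [heps_one ρ hρc hρcpt hρsupp hρint ε hσ (le_max_right _ _)] at this

lemma ode_nonneg (g F : ℝ → ℝ) (σ a : ℝ) (hσ : 0 < σ)
    (hband : σ ≤ π / 2 - a) (hband' : σ ≤ a + π / 2)
    (hg0 : g 0 = a)
    (hg' : ∀ s, HasDerivAt g (F (g s)) s)
    (hF0 : ∀ x, 0 ≤ F x)
    (hF1 : ∀ x, -(π / 2) + σ ≤ x → x ≤ π / 2 - σ → F x = 1)
    (hFhi : ∀ x, π / 2 + σ ≤ x → F x = 0) :
    ∀ t, 0 ≤ t → |g t - max (-(π / 2)) (min (π / 2) (a + t))| ≤ 2 * σ := by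
  have hcont : Continuous g :=
    continuous_iff_continuousAt.2 fun s => (hg' s).continuousAt
  have hmono : Monotone g := by
    refine monotone_of_deriv_nonneg (fun s => (hg' s).differentiableAt) fun s => ?_
    rw [(hg' s).deriv]; exact hF0 _
  set t₁ : ℝ := π / 2 - σ - a with ht₁def
  have ht₁0 : 0 ≤ t₁ := by simp only [ht₁def]; linarith
  -- exact solution on [0, t₁]
  have hmid : ∀ s ∈ Icc (0:ℝ) t₁, g s = a + s := by
    set S : Set ℝ := Icc 0 t₁ ∩ g ⁻¹' (Iic (π / 2 - σ)) with hSdef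
    have hSclosed : IsClosed S :=
      (isClosed_Icc).inter (isClosed_Iic.preimage hcont)
    have hS0 : (0:ℝ) ∈ S := by
      constructor
      · exact ⟨le_refl 0, ht₁0⟩
      · simp only [mem_preimage, mem_Iic, hg0]; linarith
    have hSbdd : BddAbove S := (BddAbove.mono (inter_subset_left) bddAbove_Icc)
    set T : ℝ := sSup S with hTdef
    have hTS : T ∈ S := hSclosed.csSup_mem ⟨0, hS0⟩ hSbdd
    have hT0 : 0 ≤ T := le_csSup hSbdd hS0
    -- g s = a + s on [0, T]
    have hconst : ∀ s ∈ Icc (0:ℝ) T, g s - s = g 0 - 0 := by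
      apply constant_of_has_deriv_right_zero
        (f := fun s => g s - s) ((hcont.sub continuous_id).continuousOn)
      intro x hx
      have hgx1 : g x ≤ π / 2 - σ := le_trans (hmono hx.2.le) hTS.2
      have hgx2 : -(π / 2) + σ ≤ g x := by
        have := hmono hx.1
        rw [hg0] at this; linarith
      have : HasDerivAt (fun s => g s - s) (F (g x) - 1) x :=
        (hg' x).sub (hasDerivAt_id x)
      rw [hF1 _ hgx2 hgx1, sub_self] at this
      exact this.hasDerivWithinAt
    have hgT : ∀ s ∈ Icc (0:ℝ) T, g s = a + s := by
      intro s hs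
      have := hconst s hs
      rw [hg0] at this; linarith
    -- T = t₁
    have hTt₁ : T = t₁ := by
      rcases lt_or_ge T t₁ with h | h
      · exfalso
        have hgTval : g T = a + T := hgT T ⟨hT0, le_refl T⟩
        have hgTlt : g T < π / 2 - σ := by rw [hgTval]; simp only [ht₁def] at h ⊢; linarith
        have hev : ∀ᶠ s in nhds T, g s < π / 2 - σ :=
          (isOpen_lt hcont continuous_const).mem_nhds (by simpa using hgTlt)
        rw [Metric.eventually_nhds_iff] at hev
        obtain ⟨δ, hδ, hball⟩ := hev
        set s' : ℝ := min t₁ (T + δ / 2) with hs'def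
        have hs'T : T < s' := by
          apply lt_min h; linarith
        have hs'mem : s' ∈ S := by
          refine ⟨⟨le_trans hT0 hs'T.le, min_le_left _ _⟩, ?_⟩
          have : dist s' T < δ := by
            rw [Real.dist_eq, abs_of_pos (by linarith)]
            have : s' ≤ T + δ / 2 := min_le_right _ _
            linarith
          exact le_of_lt (hball this)
        exact absurd (le_csSup hSbdd hs'mem) (not_le.2 hs'T)
      · exact le_antisymm hTS.1.2 h
    intro s hs
    exact hgT s (by rwa [hTt₁])
  -- confinement: g t ≤ π/2 + σ for t ≥ 0
  have hconf : ∀ t, 0 ≤ t → g t ≤ π / 2 + σ := by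
    intro t ht
    by_contra hgt
    push_neg at hgt
    set S' : Set ℝ := Icc 0 t ∩ g ⁻¹' (Iic (π / 2 + σ)) with hS'def
    have hS'closed : IsClosed S' := isClosed_Icc.inter (isClosed_Iic.preimage hcont)
    have hS'0 : (0:ℝ) ∈ S' := by
      refine ⟨⟨le_refl 0, ht⟩, ?_⟩
      simp only [mem_preimage, mem_Iic, hg0]; linarith
    have hS'bdd : BddAbove S' := BddAbove.mono (inter_subset_left) bddAbove_Icc
    set s₀ : ℝ := sSup S' with hs₀def
    have hs₀S : s₀ ∈ S' := hS'closed.csSup_mem ⟨0, hS'0⟩ hS'bdd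
    have hs₀0 : 0 ≤ s₀ := le_csSup hS'bdd hS'0
    have hs₀t : s₀ < t := by
      rcases lt_or_eq_of_le hs₀S.1.2 with h | h
      · exact h
      · exfalso; have := hs₀S.2; rw [h] at this
        exact absurd this (not_le.2 hgt)
    -- g s₀ = π/2 + σ
    have hgs₀ : g s₀ = π / 2 + σ := by
      rcases lt_or_eq_of_le (show g s₀ ≤ π / 2 + σ from hs₀S.2) with h | h
      · exfalso
        have hev : ∀ᶠ s in nhds s₀, g s < π / 2 + σ :=
          (isOpen_lt hcont continuous_const).mem_nhds (by simpa using h)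
        rw [Metric.eventually_nhds_iff] at hev
        obtain ⟨δ, hδ, hball⟩ := hev
        set s' : ℝ := min t (s₀ + δ / 2) with hs'def
        have hs'gt : s₀ < s' := lt_min hs₀t (by linarith)
        have hs'mem : s' ∈ S' := by
          refine ⟨⟨le_trans hs₀0 hs'gt.le, min_le_left _ _⟩, ?_⟩
          have : dist s' s₀ < δ := by
            rw [Real.dist_eq, abs_of_pos (by linarith)]
            have : s' ≤ s₀ + δ / 2 := min_le_right _ _
            linarith
          exact le_of_lt (hball this)
        exact absurd (le_csSup hS'bdd hs'mem) (not_le.2 hs'gt)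
      · exact h
    -- g constant on [s₀, t]
    have hconst : ∀ s ∈ Icc s₀ t, g s = g s₀ := by
      apply constant_of_has_deriv_right_zero (hcont.continuousOn)
      intro x hx
      have : π / 2 + σ ≤ g x := by rw [← hgs₀]; exact hmono hx.1
      have hd := hg' x
      rw [hFhi _ this] at hd
      exact hd.hasDerivWithinAt
    have := hconst t ⟨hs₀t.le, le_refl t⟩
    rw [hgs₀] at this
    exact absurd this (by linarith)
  -- conclusion
  intro t ht
  have hclamp : max (-(π / 2)) (min (π / 2) (a + t)) = min (π / 2) (a + t) := by
    apply max_eq_right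
    rcases le_total (π / 2) (a + t) with h | h
    · rw [min_eq_left h]; linarith
    · rw [min_eq_right h]; linarith
  rw [hclamp]
  rcases le_total t t₁ with h | h
  · have := hmid t ⟨ht, h⟩
    have hmin : min (π / 2) (a + t) = a + t := by
      apply min_eq_right; simp only [ht₁def] at h; linarith
    rw [this, hmin]
    simp only [sub_self, abs_zero]
    positivity
  · have h1 : g t₁ ≤ g t := hmono h
    have h2 : g t₁ = a + t₁ := hmid t₁ ⟨ht₁0, le_refl _⟩
    have h3 : π / 2 - σ ≤ g t := by
      have hval : g t₁ = π / 2 - σ := by rw [h2, ht₁def]; ring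
      linarith
    have h4 : g t ≤ π / 2 + σ := hconf t ht
    have h5 : π / 2 - σ ≤ min (π / 2) (a + t) := by
      apply le_min (by linarith)
      simp only [ht₁def] at h; linarith
    have h6 : min (π / 2) (a + t) ≤ π / 2 := min_le_left _ _
    rw [abs_le]
    constructor <;> nlinarith

lemma ode_est (g F : ℝ → ℝ) (σ a : ℝ) (hσ : 0 < σ)
    (hband : σ ≤ π / 2 - a) (hband' : σ ≤ a + π / 2)
    (hg0 : g 0 = a) (hg' : ∀ s, HasDerivAt g (F (g s)) s)
    (hF0 : ∀ x, 0 ≤ F x)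
    (hF1 : ∀ x, -(π / 2) + σ ≤ x → x ≤ π / 2 - σ → F x = 1)
    (hFhi : ∀ x, π / 2 + σ ≤ x → F x = 0)
    (hFlo : ∀ x, x ≤ -(π / 2) - σ → F x = 0) :
    ∀ t, |g t - max (-(π / 2)) (min (π / 2) (a + t))| ≤ 2 * σ := by
  have hπ := pi_pos
  have hodd : ∀ y : ℝ, max (-(π / 2)) (min (π / 2) (-y))
      = -(max (-(π / 2)) (min (π / 2) y)) := by
    intro y
    simp only [min_def, max_def]
    split_ifs <;> linarith
  intro t
  rcases le_or_gt 0 t with ht | ht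
  · exact ode_nonneg g F σ a hσ hband hband' hg0 hg' hF0 hF1 hFhi t ht
  · have key := ode_nonneg (fun s => -g (-s)) (fun x => F (-x)) σ (-a) hσ
      (by linarith) (by linarith) (by simp [hg0])
      (fun s => by
        have h1 : HasDerivAt (fun s : ℝ => g (-s)) (F (g (-s)) * (-1)) s :=
          (hg' (-s)).comp s (hasDerivAt_neg s)
        have h2 : HasDerivAt (fun s : ℝ => -g (-s)) (-(F (g (-s)) * (-1))) s := h1.neg
        show HasDerivAt (fun s : ℝ => -g (-s)) (F (-(-g (-s)))) s
        rw [neg_neg]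
        simpa using h2)
      (fun x => hF0 _)
      (fun x hx1 hx2 => hF1 (-x) (by linarith) (by linarith))
      (fun x hx => hFlo (-x) (by linarith))
      (-t) (by linarith)
    have heq : -g (-(-t)) - max (-(π / 2)) (min (π / 2) (-a + -t))
        = -(g t - max (-(π / 2)) (min (π / 2) (a + t))) := by
      rw [neg_neg, show -a + -t = -(a + t) by ring, hodd (a + t)]
      ring
    rw [heq, abs_neg] at key
    exact key

/-- Proposition 4.1, limit formula (25) in the angle variable: for an interior
initial angle `α₀ ∈ (-π/2, π/2)`, the solutions of the regularized circle ODE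
converge pointwise to the clamped translation
`t ↦ max(-π/2, min(π/2, α₀ + t))` as `ε → 0⁺`. -/
theorem stmt_4 (ρ : ℝ → ℝ) (hρsmooth : ContDiff ℝ (⊤ : ℕ∞) ρ)
    (hρcpt : HasCompactSupport ρ) (hρnonneg : ∀ x, 0 ≤ ρ x)
    (hρsupp : Function.support ρ ⊆ Icc (-1) 1) (hρint : ∫ x, ρ x = 1)
    (α₀ : ℝ) (hα₀ : α₀ ∈ Ioo (-(π / 2)) (π / 2))
    (γ : ℝ → ℝ → ℝ)
    (hγ0 : ∀ ε ∈ Ioo (0:ℝ) 1, γ ε 0 = α₀)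
    (hγ : ∀ ε ∈ Ioo (0:ℝ) 1, ∀ t : ℝ, HasDerivAt (γ ε)
      (Heps ρ ε (γ ε t + π / 2) - Heps ρ ε (γ ε t - π / 2)) t) :
    ∀ t : ℝ, Tendsto (fun ε => γ ε t) (nhdsWithin 0 (Ioo (0:ℝ) 1))
      (nhds (max (-(π / 2)) (min (π / 2) (α₀ + t)))) := by
  intro t
  have hπ := pi_pos
  have hρc : Continuous ρ := hρsmooth.continuous
  set σ₀ : ℝ := min (α₀ + π / 2) (π / 2 - α₀) with hσ₀def
  have hσ₀pos : 0 < σ₀ := lt_min (by linarith [hα₀.1]) (by linarith [hα₀.2])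
  have hσpos : ∀ ε ∈ Ioo (0:ℝ) 1, 0 < sigmaScale ε := by
    intro ε hε
    have h1 : Real.log ε < 0 := Real.log_neg hε.1 hε.2
    have h2 : 0 < |Real.log ε| := abs_pos.2 (ne_of_lt h1)
    rw [sigmaScale]
    positivity
  have hσto : Tendsto sigmaScale (nhdsWithin 0 (Ioo (0:ℝ) 1)) (nhds 0) := by
    have h1 : Tendsto Real.log (nhdsWithin 0 (Ioo (0:ℝ) 1)) atBot :=
      Real.tendsto_log_nhdsGT_zero.mono_left
        (nhdsWithin_mono 0 (fun x hx => hx.1 : Ioo (0:ℝ) 1 ⊆ Ioi 0))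
    have h2 : Tendsto (fun ε => |Real.log ε|) (nhdsWithin 0 (Ioo (0:ℝ) 1)) atTop :=
      tendsto_abs_atBot_atTop.comp h1
    have h3 : Tendsto (fun ε : ℝ => |Real.log ε|⁻¹) (nhdsWithin 0 (Ioo (0:ℝ) 1))
        (nhds 0) := tendsto_inv_atTop_zero.comp h2
    exact h3.congr fun x => by rw [sigmaScale, one_div]
  have hbound : ∀ᶠ ε in nhdsWithin 0 (Ioo (0:ℝ) 1),
      |γ ε t - max (-(π / 2)) (min (π / 2) (α₀ + t))| ≤ 2 * sigmaScale ε := by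
    filter_upwards [self_mem_nhdsWithin,
      hσto.eventually (eventually_lt_nhds hσ₀pos)] with ε hε hσlt
    set σ := sigmaScale ε with hσdef
    have hσ : 0 < σ := hσpos ε hε
    have hband : σ ≤ π / 2 - α₀ := le_trans hσlt.le (min_le_right _ _)
    have hband' : σ ≤ α₀ + π / 2 := le_trans hσlt.le (min_le_left _ _)
    have hmono := heps_mono ρ hρc hρcpt hρnonneg ε hσ
    have hone := fun {x} hx => heps_one ρ hρc hρcpt hρsupp hρint ε hσ (x := x) hx
    have hzero := fun {x} hx => heps_zero ρ hρsupp ε hσ (x := x) hx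
    refine ode_est (γ ε) (fun x => Heps ρ ε (x + π / 2) - Heps ρ ε (x - π / 2))
      σ α₀ hσ hband hband' (hγ0 ε hε) (hγ ε hε) ?_ ?_ ?_ ?_ t
    · intro x
      have : Heps ρ ε (x - π / 2) ≤ Heps ρ ε (x + π / 2) :=
        hmono (by linarith)
      linarith
    · intro x hx1 hx2
      show Heps ρ ε (x + π / 2) - Heps ρ ε (x - π / 2) = 1
      rw [hone (by linarith : σ ≤ x + π / 2),
        hzero (by linarith : x - π / 2 ≤ -σ)]
      norm_num
    · intro x hx
      show Heps ρ ε (x + π / 2) - Heps ρ ε (x - π / 2) = 0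
      rw [hone (by linarith : σ ≤ x + π / 2), hone (by linarith : σ ≤ x - π / 2)]
      norm_num
    · intro x hx
      show Heps ρ ε (x + π / 2) - Heps ρ ε (x - π / 2) = 0
      rw [hzero (by linarith : x + π / 2 ≤ -σ), hzero (by linarith : x - π / 2 ≤ -σ)]
      norm_num
  rw [tendsto_iff_dist_tendsto_zero]
  simp only [Real.dist_eq]
  refine squeeze_zero' (Filter.Eventually.of_forall fun ε => abs_nonneg _) hbound ?_
  have := hσto.const_mul (2:ℝ)
  simpa using this
end

section
/- Fix a mollifier ρ ∈ C_c^∞(ℝ) with ρ ≥ 0, supp ρ ⊆ [−1,1] and ∫ρ = 1; for ε ∈ (0,1) set σ(ε) = 1/|log ε|, ρ_{σ(ε)}(x) = σ(ε)^{-1} ρ(x/σ(ε)) and H_ε(x) = ∫_{−∞}^x ρ_{σ(ε)}(s) ds. Assume in addition there are constants 0 < γ₋ ≤ γ₊ < 1 with γ₋ ≤ H_ε(0) ≤ γ₊ for all ε ∈ (0,1). Let α₀ ∈ {−π/2, π/2} and for each ε let γ_ε : ℝ → ℝ be the solution of γ_ε'(t) = H_ε(γ_ε(t) + π/2) − H_ε(γ_ε(t)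 − π/2) with γ_ε(0) = α₀. Then for every t ∈ ℝ, γ_ε(t) → max(−π/2, min(π/2, α₀ + t)) as ε → 0⁺. -/
open Set Filter Real MeasureTheory

lemma sigma_pos {ε : ℝ} (hε : ε ∈ Ioo (0:ℝ) 1) : 0 < sigmaScale ε := by
  have h1 : Real.log ε < 0 := Real.log_neg hε.1 hε.2
  have : 0 < |Real.log ε| := abs_pos.mpr h1.ne
  unfold sigmaScale
  positivity

lemma rho_zero {ρ : ℝ → ℝ} (hρsupp : Function.support ρ ⊆ Icc (-1) 1)
    {y : ℝ} (hy : y ∉ Icc (-1:ℝ) 1) : ρ y = 0 := by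
  by_contra h; exact hy (hρsupp (Function.mem_support.mpr h))

lemma g_zero {ρ : ℝ → ℝ} (hρsupp : Function.support ρ ⊆ Icc (-1) 1)
    {ε : ℝ} (hσ : 0 < sigmaScale ε)
    {s : ℝ} (hs : s ∉ Icc (-(sigmaScale ε)) (sigmaScale ε)) :
    (sigmaScale ε)⁻¹ * ρ (s / sigmaScale ε) = 0 := by
  have h2 : s / sigmaScale ε ∉ Icc (-1:ℝ) 1 := by
    simp only [mem_Icc, not_and_or, not_le] at hs ⊢
    rcases hs with h | h
    · left; rw [div_lt_iff₀ hσ]; linarith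
    · right; rw [lt_div_iff₀ hσ]; linarith
  rw [rho_zero hρsupp h2, mul_zero]

lemma g_integrable {ρ : ℝ → ℝ} (hρc : Continuous ρ)
    (hρsupp : Function.support ρ ⊆ Icc (-1) 1) {ε : ℝ} (hσ : 0 < sigmaScale ε) :
    Integrable (fun s => (sigmaScale ε)⁻¹ * ρ (s / sigmaScale ε)) := by
  apply Continuous.integrable_of_hasCompactSupport
  · exact continuous_const.mul (hρc.comp (continuous_id.div_const _))
  · exact HasCompactSupport.intro isCompact_Icc (fun s hs => g_zero hρsupp hσ hs)

lemma g_total {ρ : ℝ → ℝ} (hρint : ∫ x, ρ x = 1) {ε : ℝ} (hσ : 0 < sigmaScale ε) :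
    (∫ s, (sigmaScale ε)⁻¹ * ρ (s / sigmaScale ε)) = 1 := by
  rw [integral_const_mul, MeasureTheory.Measure.integral_comp_div ρ (sigmaScale ε), hρint,
    abs_of_pos hσ]
  simp [smul_eq_mul, inv_mul_cancel₀ hσ.ne']

lemma H_mono {ρ : ℝ → ℝ} (hρc : Continuous ρ) (hρnonneg : ∀ x, 0 ≤ ρ x)
    (hρsupp : Function.support ρ ⊆ Icc (-1) 1) {ε : ℝ} (hσ : 0 < sigmaScale ε)
    {x y : ℝ} (hxy : x ≤ y) : Heps ρ ε x ≤ Heps ρ ε y := by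
  apply setIntegral_mono_set (g_integrable hρc hρsupp hσ).integrableOn
  · exact Eventually.of_forall fun s => mul_nonneg (by positivity) (hρnonneg _)
  · exact HasSubset.Subset.eventuallyLE (Iic_subset_Iic.mpr hxy)

lemma H_nonneg {ρ : ℝ → ℝ} (hρnonneg : ∀ x, 0 ≤ ρ x) {ε : ℝ} (hσ : 0 < sigmaScale ε)
    (x : ℝ) : 0 ≤ Heps ρ ε x :=
  setIntegral_nonneg measurableSet_Iic fun s _ => mul_nonneg (by positivity) (hρnonneg _)

lemma H_le_one {ρ : ℝ → ℝ} (hρc : Continuous ρ) (hρnonneg : ∀ x, 0 ≤ ρ x)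
    (hρsupp : Function.support ρ ⊆ Icc (-1) 1) (hρint : ∫ x, ρ x = 1)
    {ε : ℝ} (hσ : 0 < sigmaScale ε) (x : ℝ) : Heps ρ ε x ≤ 1 := by
  rw [← g_total hρint hσ (ρ := ρ)]
  exact setIntegral_le_integral (g_integrable hρc hρsupp hσ)
    (Eventually.of_forall fun s => mul_nonneg (by positivity) (hρnonneg _))

lemma H_zero {ρ : ℝ → ℝ} (hρsupp : Function.support ρ ⊆ Icc (-1) 1)
    {ε : ℝ} (hσ : 0 < sigmaScale ε) {x : ℝ} (hx : x ≤ -(sigmaScale ε)) :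
    Heps ρ ε x = 0 := by
  unfold Heps
  rw [integral_Iic_eq_integral_Iio]
  rw [setIntegral_congr_fun measurableSet_Iio (g := fun _ => (0:ℝ))
    (fun s hs => g_zero hρsupp hσ (by
      simp only [mem_Iio] at hs
      simp only [mem_Icc, not_and_or, not_le]
      left; linarith))]
  simp

lemma H_one {ρ : ℝ → ℝ} (hρc : Continuous ρ)
    (hρsupp : Function.support ρ ⊆ Icc (-1) 1) (hρint : ∫ x, ρ x = 1)
    {ε : ℝ} (hσ : 0 < sigmaScale ε) {x : ℝ} (hx : sigmaScale ε ≤ x) :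
    Heps ρ ε x = 1 := by
  have hsplit : (∫ s in Iic x ∪ Ioi x, (sigmaScale ε)⁻¹ * ρ (s / sigmaScale ε))
      = Heps ρ ε x + ∫ s in Ioi x, (sigmaScale ε)⁻¹ * ρ (s / sigmaScale ε) :=
    setIntegral_union (Iic_disjoint_Ioi le_rfl) measurableSet_Ioi
      (g_integrable hρc hρsupp hσ).integrableOn (g_integrable hρc hρsupp hσ).integrableOn
  rw [Iic_union_Ioi, setIntegral_univ, g_total hρint hσ] at hsplit
  have hzero : (∫ s in Ioi x, (sigmaScale ε)⁻¹ * ρ (s / sigmaScale ε)) = 0 := by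
    rw [setIntegral_congr_fun measurableSet_Ioi (g := fun _ => (0:ℝ))
      (fun s hs => g_zero hρsupp hσ (by
        simp only [mem_Ioi] at hs
        simp only [mem_Icc, not_and_or, not_le]
        right; linarith))]
    simp
  linarith

lemma rate_le {u F : ℝ → ℝ} (hu : ∀ t, HasDerivAt u (F t) t) {a b c : ℝ}
    (hab : a ≤ b) (h : ∀ s ∈ Ioo a b, F s ≤ c) : u b - u a ≤ c * (b - a) := by
  have hd : ∀ t, HasDerivAt (fun x => c * x - u x) (c - F t) t := fun t =>
    by have h := ((hasDerivAt_id t).const_mul c).sub (hu t); rw [mul_one] at h; exact h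
  have hdiff : Differentiable ℝ (fun x => c * x - u x) := fun t => (hd t).differentiableAt
  have mono : MonotoneOn (fun x => c * x - u x) (Icc a b) := by
    apply monotoneOn_of_deriv_nonneg (convex_Icc a b) hdiff.continuous.continuousOn
      (hdiff.differentiableOn)
    intro x hx
    rw [interior_Icc] at hx
    rw [(hd x).deriv]
    linarith [h x hx]
  have := mono (left_mem_Icc.mpr hab) (right_mem_Icc.mpr hab) hab
  simp only at this
  linarith [this]

lemma rate_ge {u F : ℝ → ℝ} (hu : ∀ t, HasDerivAt u (F t) t) {a b c : ℝ}
    (hab : a ≤ b) (h : ∀ s ∈ Ioo a b, c ≤ F s) : c * (b - a) ≤ u b - u a := by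
  have := rate_le (u := fun x => -u x) (F := fun t => -F t)
    (fun t => (hu t).neg) hab (c := -c) (fun s hs => neg_le_neg (h s hs))
  nlinarith [this]

lemma key {ρ : ℝ → ℝ} (hρc : Continuous ρ) (hρnonneg : ∀ x, 0 ≤ ρ x)
    (hρsupp : Function.support ρ ⊆ Icc (-1) 1) (hρint : ∫ x, ρ x = 1)
    {γminus γplus : ℝ} (hγm : 0 < γminus) (hγmp : γminus ≤ γplus) (hγp : γplus < 1)
    {ε : ℝ} (hσ : 0 < sigmaScale ε) (hσπ : sigmaScale ε ≤ π / 2)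
    (hH0m : γminus ≤ Heps ρ ε 0) (hH0p : Heps ρ ε 0 ≤ γplus)
    {α₀ : ℝ} (hα₀ : α₀ = -(π / 2) ∨ α₀ = π / 2)
    {u : ℝ → ℝ} (hu0 : u 0 = α₀)
    (hu : ∀ s, HasDerivAt u (Heps ρ ε (u s + π / 2) - Heps ρ ε (u s - π / 2)) s)
    (t : ℝ) :
    |u t - max (-(π / 2)) (min (π / 2) (α₀ + t))| ≤
      sigmaScale ε / min γminus (1 - γplus) := by
  set σ := sigmaScale ε with hσdef
  set c := min γminus (1 - γplus) with hcdef
  have hπ : 0 < π := pi_pos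
  have hc : 0 < c := lt_min hγm (by linarith)
  have hc1 : c < 1 := lt_of_le_of_lt (min_le_left _ _) (by linarith)
  have hσc : 0 < σ / c := div_pos hσ hc
  have hσσc : σ ≤ σ / c := by
    rw [le_div_iff₀ hc]; nlinarith
  -- basic facts about the velocity
  have hF0 : ∀ s, 0 ≤ Heps ρ ε (u s + π / 2) - Heps ρ ε (u s - π / 2) := fun s =>
    sub_nonneg.mpr (H_mono hρc hρnonneg hρsupp hσ (by linarith))
  have hF1 : ∀ s, Heps ρ ε (u s + π / 2) - Heps ρ ε (u s - π / 2) ≤ 1 := fun s => by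
    have := H_le_one hρc hρnonneg hρsupp hρint hσ (u s + π / 2)
    have := H_nonneg hρnonneg hσ (u s - π / 2)
    linarith
  have hFhi : ∀ s, π / 2 + σ ≤ u s →
      Heps ρ ε (u s + π / 2) - Heps ρ ε (u s - π / 2) = 0 := fun s hs => by
    rw [H_one hρc hρsupp hρint hσ (by linarith), H_one hρc hρsupp hρint hσ (by linarith)]
    ring
  have hFlo : ∀ s, u s ≤ -(π / 2) - σ →
      Heps ρ ε (u s + π / 2) - Heps ρ ε (u s - π / 2) = 0 := fun s hs => by
    rw [H_zero hρsupp hσ (by linarith), H_zero hρsupp hσ (by linarith)]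
    ring
  have hFone : ∀ s, -(π / 2) + σ ≤ u s → u s ≤ π / 2 - σ →
      Heps ρ ε (u s + π / 2) - Heps ρ ε (u s - π / 2) = 1 := fun s h1 h2 => by
    rw [H_one hρc hρsupp hρint hσ (by linarith), H_zero hρsupp hσ (by linarith)]
    ring
  have umono : ∀ a b, a ≤ b → u a ≤ u b := fun a b hab => by
    have := rate_ge hu hab (c := 0) (fun s _ => hF0 s); linarith
  have ulip : ∀ a b, a ≤ b → u b - u a ≤ b - a := fun a b hab => by
    have := rate_le hu hab (c := 1) (fun s _ => hF1 s); linarith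
  have hudiff : Differentiable ℝ u := fun s => (hu s).differentiableAt
  have hucont : Continuous u := hudiff.continuous
  have hu0le : u 0 ≤ π / 2 := by rcases hα₀ with h | h <;> rw [hu0, h] <;> linarith
  have hu0ge : -(π / 2) ≤ u 0 := by rcases hα₀ with h | h <;> rw [hu0, h] <;> linarith
  -- upper barrier
  have barrier_hi : ∀ s, u s ≤ π / 2 + σ := by
    intro s
    by_contra hcon
    push_neg at hcon
    have hspos : 0 < s := by
      rcases le_or_gt s 0 with h | h
      · have := umono s 0 h; linarith
      · exact h
    set S := Icc 0 s ∩ {x | u x ≤ π / 2 + σ} with hSdef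
    have hS0 : (0:ℝ) ∈ S := ⟨⟨le_rfl, hspos.le⟩, by simpa using by linarith⟩
    have hSbdd : BddAbove S := BddAbove.mono inter_subset_left bddAbove_Icc
    have hSclosed : IsClosed S :=
      isClosed_Icc.inter (isClosed_le hucont continuous_const)
    have hm : sSup S ∈ S := hSclosed.csSup_mem ⟨0, hS0⟩ hSbdd
    have hmlt : sSup S < s := by
      rcases lt_or_eq_of_le hm.1.2 with h | h
      · exact h
      · exfalso; have := hm.2; rw [h] at this; simp only [mem_setOf_eq] at this; linarith
    have h_above : ∀ x ∈ Ioo (sSup S) s, π / 2 + σ ≤ u x := by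
      intro x hx
      by_contra hx2
      push_neg at hx2
      have hxS : x ∈ S := ⟨⟨le_trans hm.1.1 hx.1.le, hx.2.le⟩, hx2.le⟩
      exact absurd (le_csSup hSbdd hxS) (not_le.mpr hx.1)
    have := rate_le hu hmlt.le (c := 0)
      (fun x hx => le_of_eq (hFhi x (h_above x hx)))
    have := hm.2
    simp only [mem_setOf_eq] at this
    linarith [hm.2]
  -- lower barrier
  have barrier_lo : ∀ s, -(π / 2) - σ ≤ u s := by
    intro s
    by_contra hcon
    push_neg at hcon
    have hsneg : s < 0 := by
      rcases le_or_gt 0 s with h | h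
      · have := umono 0 s h; linarith
      · exact h
    set S := Icc s 0 ∩ {x | -(π / 2) - σ ≤ u x} with hSdef
    have hS0 : (0:ℝ) ∈ S := ⟨⟨hsneg.le, le_rfl⟩, by simpa using by linarith⟩
    have hSbdd : BddBelow S := BddBelow.mono inter_subset_left bddBelow_Icc
    have hSclosed : IsClosed S :=
      isClosed_Icc.inter (isClosed_le continuous_const hucont)
    have hm : sInf S ∈ S := hSclosed.csInf_mem ⟨0, hS0⟩ hSbdd
    have hmgt : s < sInf S := by
      rcases lt_or_eq_of_le hm.1.1 with h | h
      · exact h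
      · exfalso; have := hm.2; rw [← h] at this; simp only [mem_setOf_eq] at this; linarith
    have h_below : ∀ x ∈ Ioo s (sInf S), u x ≤ -(π / 2) - σ := by
      intro x hx
      by_contra hx2
      push_neg at hx2
      have hxS : x ∈ S := ⟨⟨hx.1.le, le_trans hx.2.le hm.1.2⟩, hx2.le⟩
      exact absurd (csInf_le hSbdd hxS) (not_le.mpr hx.2)
    have := rate_le hu hmgt.le (c := 0)
      (fun x hx => le_of_eq (hFlo x (h_below x hx)))
    have h2 := hm.2
    simp only [mem_setOf_eq] at h2
    linarith
  rw [abs_le]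
  rcases hα₀ with h₀ | h₀
  · -- α₀ = -π/2
    rw [h₀] at hu0 ⊢
    rcases le_or_gt t 0 with ht | ht
    · -- t ≤ 0 : clamp = -π/2
      have hL1 : min (π / 2) (-(π / 2) + t) = -(π / 2) + t := min_eq_right (by linarith)
      have hL2 : max (-(π / 2)) (-(π / 2) + t) = -(π / 2) := max_eq_left (by linarith)
      rw [hL1, hL2]
      have h1 : u t ≤ -(π / 2) := by rw [← hu0]; exact umono t 0 ht
      have h2 := barrier_lo t
      constructor <;> linarith
    · -- t > 0 : clamp = min (π/2) (-π/2 + t)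
      have hmge : -(π / 2) ≤ min (π / 2) (-(π / 2) + t) := le_min (by linarith) (by linarith)
      rw [max_eq_right hmge]
      constructor
      · -- lower bound
        rcases le_or_gt t (σ / c) with ht2 | ht2
        · have h1 : -(π / 2) ≤ u t := by rw [← hu0]; exact umono 0 t ht.le
          have h2 : min (π / 2) (-(π / 2) + t) ≤ -(π / 2) + t := min_le_right _ _
          linarith
        · have stepA : -(π / 2) + σ ≤ u (σ / c) := by
            by_contra hA
            push_neg at hA
            have hrate : ∀ x ∈ Ioo 0 (σ / c),
                c ≤ Heps ρ ε (u x + π / 2) - Heps ρ ε (u x - π / 2) := by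
              intro x hx
              have hx1 : u x ≤ u (σ / c) := umono x (σ / c) hx.2.le
              have hx2 : -(π / 2) ≤ u x := by rw [← hu0]; exact umono 0 x hx.1.le
              have e1 : Heps ρ ε (u x - π / 2) = 0 := H_zero hρsupp hσ (by linarith)
              have e2 : γminus ≤ Heps ρ ε (u x + π / 2) :=
                le_trans hH0m (H_mono hρc hρnonneg hρsupp hσ (by linarith))
              have := min_le_left γminus (1 - γplus)
              rw [e1]
              linarith
            have hr := rate_ge hu hσc.le hrate
            have hcc : c * (σ / c - 0) = σ := by field_simp; ring
            rw [hcc] at hr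
            linarith
          rcases le_or_gt (π / 2 - σ) (u t) with hcase | hcase
          · have : min (π / 2) (-(π / 2) + t) ≤ π / 2 := min_le_left _ _
            linarith
          · have hmid : ∀ x ∈ Ioo (σ / c) t,
                (1:ℝ) ≤ Heps ρ ε (u x + π / 2) - Heps ρ ε (u x - π / 2) := by
              intro x hx
              have hx1 : -(π / 2) + σ ≤ u x := le_trans stepA (umono _ x hx.1.le)
              have hx2 : u x ≤ π / 2 - σ := le_trans (umono x t hx.2.le) hcase.le
              rw [hFone x hx1 hx2]
            have hr := rate_ge hu ht2.le hmid
            have : min (π / 2) (-(π / 2) + t) ≤ -(π / 2) + t := min_le_right _ _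
            linarith
      · -- upper bound
        have h1 : u t - u 0 ≤ t - 0 := ulip 0 t ht.le
        rw [hu0] at h1
        have h2 := barrier_hi t
        rcases le_total (π / 2) (-(π / 2) + t) with hm2 | hm2
        · rw [min_eq_left hm2]; linarith
        · rw [min_eq_right hm2]; linarith
  · -- α₀ = π/2
    rw [h₀] at hu0 ⊢
    rcases le_or_gt 0 t with ht | ht
    · -- t ≥ 0 : clamp = π/2
      have hL1 : min (π / 2) (π / 2 + t) = π / 2 := min_eq_left (by linarith)
      rw [hL1, max_eq_right (by linarith)]
      have h1 : π / 2 ≤ u t := by rw [← hu0]; exact umono 0 t ht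
      have h2 := barrier_hi t
      constructor <;> linarith
    · -- t < 0 : clamp = max (-π/2) (π/2 + t)
      have hL1 : min (π / 2) (π / 2 + t) = π / 2 + t := min_eq_right (by linarith)
      rw [hL1]
      constructor
      · -- lower bound
        have h1 : u 0 - u t ≤ 0 - t := ulip t 0 ht.le
        rw [hu0] at h1
        have h2 := barrier_lo t
        have : max (-(π / 2)) (π / 2 + t) ≤ u t + σ := max_le (by linarith) (by linarith)
        linarith
      · -- upper bound
        rcases le_or_gt (-(σ / c)) t with ht2 | ht2
        · have h1 : u t ≤ π / 2 := by rw [← hu0]; exact umono t 0 ht.le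
          have h2 : π / 2 + t ≤ max (-(π / 2)) (π / 2 + t) := le_max_right _ _
          linarith
        · rcases le_or_gt (u t) (-(π / 2) + σ) with hcase | hcase
          · have h2 : -(π / 2) ≤ max (-(π / 2)) (π / 2 + t) := le_max_left _ _
            linarith
          · have step1 : u (-(σ / c)) ≤ π / 2 - σ := by
              have hrate : ∀ x ∈ Ioo (-(σ / c)) 0,
                  c ≤ Heps ρ ε (u x + π / 2) - Heps ρ ε (u x - π / 2) := by
                intro x hx
                have hx1 : u t ≤ u x := umono t x (by linarith [hx.1])
                have hx2 : u x ≤ π / 2 := by rw [← hu0]; exact umono x 0 hx.2.le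
                have e1 : Heps ρ ε (u x + π / 2) = 1 :=
                  H_one hρc hρsupp hρint hσ (by linarith)
                have e2 : Heps ρ ε (u x - π / 2) ≤ γplus :=
                  le_trans (H_mono hρc hρnonneg hρsupp hσ (by linarith : u x - π / 2 ≤ 0)) hH0p
                have := min_le_right γminus (1 - γplus)
                rw [e1]
                linarith
              have hr := rate_ge hu (by linarith : -(σ / c) ≤ 0) hrate
              have hcc : c * (0 - -(σ / c)) = σ := by field_simp; ring
              rw [hcc] at hr
              rw [hu0] at hr
              linarith
            have hmid : ∀ x ∈ Ioo t (-(σ / c)),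
                (1:ℝ) ≤ Heps ρ ε (u x + π / 2) - Heps ρ ε (u x - π / 2) := by
              intro x hx
              have hx1 : -(π / 2) + σ ≤ u x := le_trans hcase.le (umono t x hx.1.le)
              have hx2 : u x ≤ π / 2 - σ := le_trans (umono x _ hx.2.le) step1
              rw [hFone x hx1 hx2]
            have hr := rate_ge hu ht2.le hmid
            have h2 : π / 2 + t ≤ max (-(π / 2)) (π / 2 + t) := le_max_right _ _
            linarith

lemma sigma_tendsto : Tendsto sigmaScale (nhdsWithin 0 (Ioo (0:ℝ) 1)) (nhds 0) := by
  have h1 : Tendsto Real.log (nhdsWithin 0 (Ioo (0:ℝ) 1)) atBot :=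
    Real.tendsto_log_nhdsGT_zero.mono_left
      (nhdsWithin_mono _ Ioo_subset_Ioi_self)
  have h2 : Tendsto (fun ε => |Real.log ε|) (nhdsWithin 0 (Ioo (0:ℝ) 1)) atTop :=
    tendsto_abs_atBot_atTop.comp h1
  have h3 : Tendsto (fun ε => |Real.log ε|⁻¹) (nhdsWithin 0 (Ioo (0:ℝ) 1)) (nhds 0) :=
    tendsto_inv_atTop_zero.comp h2
  have he : sigmaScale = fun ε => |Real.log ε|⁻¹ := funext fun ε => one_div _
  rw [he]
  exact h3

/-- Formula (26) of Section 4 (the generic case (a)): under the additional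
condition `0 < γ₋ ≤ H_ε(0) ≤ γ₊ < 1`, the solutions of the regularized circle
ODE starting at the endpoints `α₀ = ±π/2` converge pointwise to the clamped
translation `t ↦ max(-π/2, min(π/2, α₀ + t))` as `ε → 0⁺`. -/
theorem stmt_5 (ρ : ℝ → ℝ) (hρsmooth : ContDiff ℝ (⊤ : ℕ∞) ρ)
    (hρcpt : HasCompactSupport ρ) (hρnonneg : ∀ x, 0 ≤ ρ x)
    (hρsupp : Function.support ρ ⊆ Icc (-1) 1) (hρint : ∫ x, ρ x = 1)
    (γminus γplus : ℝ) (hγm : 0 < γminus) (hγmp : γminus ≤ γplus) (hγp : γplus < 1)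
    (hH0 : ∀ ε ∈ Ioo (0:ℝ) 1, γminus ≤ Heps ρ ε 0 ∧ Heps ρ ε 0 ≤ γplus)
    (α₀ : ℝ) (hα₀ : α₀ = -(π / 2) ∨ α₀ = π / 2)
    (γ : ℝ → ℝ → ℝ)
    (hγ0 : ∀ ε ∈ Ioo (0:ℝ) 1, γ ε 0 = α₀)
    (hγ : ∀ ε ∈ Ioo (0:ℝ) 1, ∀ t : ℝ, HasDerivAt (γ ε)
      (Heps ρ ε (γ ε t + π / 2) - Heps ρ ε (γ ε t - π / 2)) t) :
    ∀ t : ℝ, Tendsto (fun ε => γ ε t) (nhdsWithin 0 (Ioo (0:ℝ) 1))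
      (nhds (max (-(π / 2)) (min (π / 2) (α₀ + t)))) := by
  intro t
  have hc : 0 < min γminus (1 - γplus) := lt_min hγm (by linarith)
  have hq : Tendsto (fun ε => sigmaScale ε / min γminus (1 - γplus))
      (nhdsWithin 0 (Ioo (0:ℝ) 1)) (nhds 0) := by
    simpa using sigma_tendsto.div_const (min γminus (1 - γplus))
  rw [tendsto_iff_dist_tendsto_zero]
  apply squeeze_zero' (Eventually.of_forall fun ε => dist_nonneg) ?_ hq
  have hev1 : ∀ᶠ ε in nhdsWithin 0 (Ioo (0:ℝ) 1), sigmaScale ε < π / 2 :=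
    sigma_tendsto.eventually (eventually_lt_nhds (by positivity))
  have hev2 : ∀ᶠ ε in nhdsWithin 0 (Ioo (0:ℝ) 1), ε ∈ Ioo (0:ℝ) 1 :=
    eventually_mem_nhdsWithin
  filter_upwards [hev1, hev2] with ε h1 h2
  rw [Real.dist_eq]
  exact key hρsmooth.continuous hρnonneg hρsupp hρint hγm hγmp hγp
    (sigma_pos h2) h1.le (hH0 ε h2).1 (hH0 ε h2).2 hα₀ (hγ0 ε h2) (hγ ε h2) t
end

section
/- Let ρ₀ ∈ C_c^∞(ℝ) satisfy 0 ≤ ρ₀ ≤ 1, supp ρ₀ ⊆ [−1,1], ∫ρ₀ = 1 and ρ₀(0) = 1, and define ρ : ℝ → ℝ by ρ(x) = Σ_{n ∈ ℤ} ρ₀(2^{|n|}(x − n)). Then for every x ∈ ℝ and every δ > 0 there exists ε ∈ (0, δ) with ρ(x/ε) = 1. In particular, there is no x ∈ ℝ for which ρ(x/ε) → 0 as ε → 0⁺. -/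
open Set Filter

/-- The "shrinking comb" `ρ(x) = ∑_{n ∈ ℤ} ρ₀(2^{|n|}(x − n))`. -/
noncomputable def comb (ρ₀ : ℝ → ℝ) (x : ℝ) : ℝ :=
  ∑' n : ℤ, ρ₀ ((2:ℝ) ^ n.natAbs * (x - (n:ℝ)))

lemma vanish_aux (ρ₀ : ℝ → ℝ) (hc : Continuous ρ₀)
    (hsupp : Function.support ρ₀ ⊆ Icc (-1) 1) :
    ∀ y : ℝ, 1 ≤ |y| → ρ₀ y = 0 := by
  have hgt : ∀ y : ℝ, 1 < |y| → ρ₀ y = 0 := by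
    intro y hy
    by_contra h
    have := hsupp h
    rw [mem_Icc] at this
    exact absurd hy (not_lt.mpr (abs_le.mpr this))
  intro y hy
  rcases eq_or_lt_of_le hy with h | h
  · have : y = 1 ∨ y = -1 := by
      rcases abs_cases y with ⟨h1, _⟩ | ⟨h1, _⟩
      · left; linarith
      · right; linarith
    have key : ∀ z : ℝ, ρ₀ z = 0 → ρ₀ z = 0 := fun _ h => h
    rcases this with rfl | rfl
    · have h1 : Tendsto ρ₀ (nhdsWithin 1 (Ioi 1)) (nhds (ρ₀ 1)) :=
        (hc.continuousWithinAt)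
      have h2 : Tendsto ρ₀ (nhdsWithin 1 (Ioi 1)) (nhds 0) := by
        apply Tendsto.congr' _ tendsto_const_nhds
        filter_upwards [self_mem_nhdsWithin] with z hz
        exact (hgt z (by rw [abs_of_pos (by linarith [mem_Ioi.mp hz])]; exact hz)).symm
      exact tendsto_nhds_unique h1 h2
    · have h1 : Tendsto ρ₀ (nhdsWithin (-1) (Iio (-1))) (nhds (ρ₀ (-1))) :=
        (hc.continuousWithinAt)
      have h2 : Tendsto ρ₀ (nhdsWithin (-1) (Iio (-1))) (nhds 0) := by
        apply Tendsto.congr' _ tendsto_const_nhds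
        filter_upwards [self_mem_nhdsWithin] with z hz
        have : z < -1 := mem_Iio.mp hz
        exact (hgt z (by rw [abs_of_neg (by linarith)]; linarith)).symm
      exact tendsto_nhds_unique h1 h2
  · exact hgt y h

lemma comb_int (ρ₀ : ℝ → ℝ) (hc : Continuous ρ₀)
    (hsupp : Function.support ρ₀ ⊆ Icc (-1) 1) (hzero : ρ₀ 0 = 1)
    (m : ℤ) : comb ρ₀ (m : ℝ) = 1 := by
  have hv := vanish_aux ρ₀ hc hsupp
  unfold comb
  rw [tsum_eq_single m]
  · simp [hzero]
  · intro n hn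
    apply hv
    rw [abs_mul]
    have h1 : (1:ℝ) ≤ |(2:ℝ) ^ n.natAbs| := by
      rw [abs_of_pos (by positivity)]
      exact one_le_pow₀ (by norm_num)
    have h2 : (1:ℝ) ≤ |(m:ℝ) - (n:ℝ)| := by
      have : ((m - n : ℤ) : ℝ) ≠ 0 := by
        exact_mod_cast sub_ne_zero.mpr (Ne.symm hn)
      rw [show (m:ℝ) - (n:ℝ) = ((m - n : ℤ) : ℝ) by push_cast; ring, ← Int.cast_abs]
      exact_mod_cast Int.one_le_abs (by exact_mod_cast this)
    nlinarith

/-- First half of the counterexample in the proof of Theorem 5.2 ((iv) does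
not imply (iii)): for every `x ∈ ℝ` and every `δ > 0` there is `ε ∈ (0, δ)`
with `ρ(x/ε) = 1`; in particular `ρ(x/ε)` converges to `0` for no `x`. -/
theorem stmt_10 (ρ₀ : ℝ → ℝ) (hsmooth : ContDiff ℝ (⊤ : ℕ∞) ρ₀)
    (hcpt : HasCompactSupport ρ₀)
    (hrange : ∀ x, ρ₀ x ∈ Icc (0:ℝ) 1)
    (hsupp : Function.support ρ₀ ⊆ Icc (-1) 1)
    (hint : ∫ x, ρ₀ x = 1) (hzero : ρ₀ 0 = 1) :
    (∀ x : ℝ, ∀ δ > (0:ℝ), ∃ ε ∈ Ioo (0:ℝ) δ, comb ρ₀ (x / ε) = 1) ∧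
    (∀ x : ℝ, ¬ Tendsto (fun ε => comb ρ₀ (x / ε))
      (nhdsWithin 0 (Ioi (0:ℝ))) (nhds 0)) := by
  have hci := comb_int ρ₀ hsmooth.continuous hsupp hzero
  have part1 : ∀ x : ℝ, ∀ δ > (0:ℝ), ∃ ε ∈ Ioo (0:ℝ) δ, comb ρ₀ (x / ε) = 1 := by
    intro x δ hδ
    rcases eq_or_ne x 0 with rfl | hx
    · refine ⟨δ/2, ⟨by linarith, by linarith⟩, ?_⟩
      rw [zero_div, show (0:ℝ) = ((0:ℤ):ℝ) by norm_num, hci 0]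
    · obtain ⟨n, hn⟩ := exists_nat_gt (|x| / δ)
      set n' : ℕ := max n 1 with hn'
      have hn'1 : (1:ℝ) ≤ (n' : ℝ) := by exact_mod_cast le_max_right n 1
      have hn'gt : |x| / δ < (n' : ℝ) := lt_of_lt_of_le hn (by exact_mod_cast le_max_left n 1)
      set m : ℤ := if 0 < x then (n' : ℤ) else -(n' : ℤ) with hm
      have hm0 : (m : ℝ) ≠ 0 := by
        rcases le_or_gt x 0 with h | h <;> simp [hm, h.not_gt, h] <;> positivity
      have hsign : 0 < x / (m : ℝ) := by
        rcases lt_trichotomy x 0 with h | h | h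
        · have : (m:ℝ) = -(n':ℝ) := by simp [hm, h.not_gt]
          rw [this]
          apply div_pos_of_neg_of_neg h; linarith
        · exact absurd h hx
        · have : (m:ℝ) = (n':ℝ) := by simp [hm, h]
          rw [this]; positivity
      have habs : |(m:ℝ)| = (n':ℝ) := by
        rcases lt_or_ge 0 x with h | h <;> simp [hm, h, h.not_gt] <;> try simp [abs_of_nonneg]
      refine ⟨x / m, ⟨hsign, ?_⟩, ?_⟩
      · have : |x / m| < δ := by
          rw [abs_div, habs, div_lt_iff₀ (by linarith)]
          calc |x| = (|x|/δ) * δ := by field_simp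
          _ < (n':ℝ) * δ := by apply mul_lt_mul_of_pos_right hn'gt hδ
          _ = δ * (n':ℝ) := by ring
        calc x / m ≤ |x / m| := le_abs_self _
        _ < δ := this
      · have hx2 : x / (x / (m:ℝ)) = (m:ℝ) := by field_simp
        rw [hx2, hci m]
  refine ⟨part1, ?_⟩
  intro x hT
  have := (Metric.tendsto_nhds.mp hT) (1/2) (by norm_num)
  rw [eventually_nhdsWithin_iff, Metric.eventually_nhds_iff] at this
  obtain ⟨δ, hδ, hball⟩ := this
  obtain ⟨ε, ⟨hε0, hεδ⟩, hεval⟩ := part1 x δ hδ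
  have := hball (show dist ε 0 < δ by rw [Real.dist_eq, sub_zero, abs_of_pos hε0]; exact hεδ) hε0
  rw [hεval, Real.dist_eq] at this
  norm_num at this
end

section
/- Let ρ₀ ∈ C_c^∞(ℝ) satisfy 0 ≤ ρ₀ ≤ 1, supp ρ₀ ⊆ [−1,1], ∫ρ₀ = 1 and ρ₀(0) = 1, and define ρ : ℝ → ℝ by ρ(x) = Σ_{n ∈ ℤ} ρ₀(2^{|n|}(x − n)). Then: (a) ρ is integrable with ∫_ℝ ρ(x) dx = 3; and (b) for every continuously differentiable f : ℝ → ℝ with f(0) = 0 and every continuous compactly supported φ : ℝ → ℝ, ∫_ℝ f(ρ(x/ε)) φ(x) dx → 0 as ε → 0⁺. Consequently the net u_ε(x) := ρ(x/ε) is model-associated to the zero function, i.e., f ∘ u_ε → f(0) in the sense of distributions for every smooth f, although u_ε(x) converges to 0 for no x ∈ ℝ. -/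
open Set Filter MeasureTheory
open scoped ENNReal NNReal

/-- Second half of the counterexample in the proof of Theorem 5.2 ((iv) does
not follow from (iii)): (a) the comb `ρ` is integrable with `∫ρ = 3`, and
(b) for every C¹ function `f` with `f(0) = 0` and every continuous compactly
supported `φ`, `∫ f(ρ(x/ε)) φ(x) dx → 0` as `ε → 0⁺`, i.e. the net
`u_ε(x) = ρ(x/ε)` is model-associated to `0`. -/
theorem stmt_11 (ρ₀ : ℝ → ℝ) (hsmooth : ContDiff ℝ (⊤ : ℕ∞) ρ₀)
    (hcpt : HasCompactSupport ρ₀)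
    (hrange : ∀ x, ρ₀ x ∈ Icc (0:ℝ) 1)
    (hsupp : Function.support ρ₀ ⊆ Icc (-1) 1)
    (hint : ∫ x, ρ₀ x = 1) (hzero : ρ₀ 0 = 1) :
    (Integrable (comb ρ₀) ∧ ∫ x, comb ρ₀ x = 3) ∧
    (∀ f : ℝ → ℝ, ContDiff ℝ 1 f → f 0 = 0 →
      ∀ φ : ℝ → ℝ, Continuous φ → HasCompactSupport φ →
        Tendsto (fun ε : ℝ => ∫ x, f (comb ρ₀ (x / ε)) * φ x)
          (nhdsWithin 0 (Ioi (0:ℝ))) (nhds 0)) := by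
  set g : ℤ → ℝ → ℝ := fun n x => ρ₀ ((2:ℝ) ^ n.natAbs * (x - (n:ℝ))) with hgdef
  have hnonneg : ∀ y, 0 ≤ ρ₀ y := fun y => (hrange y).1
  have hle1 : ∀ y, ρ₀ y ≤ 1 := fun y => (hrange y).2
  have h2pow : ∀ n : ℤ, (1:ℝ) ≤ 2 ^ n.natAbs := fun n => one_le_pow₀ (by norm_num)
  have hsupp' : ∀ n x, g n x ≠ 0 → |x - (n:ℝ)| ≤ 1 := by
    intro n x h
    have hy : (2:ℝ) ^ n.natAbs * (x - n) ∈ Icc (-1:ℝ) 1 := hsupp h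
    have habs : |(2:ℝ) ^ n.natAbs * (x - n)| ≤ 1 := abs_le.2 ⟨hy.1, hy.2⟩
    rw [abs_mul, abs_of_pos (pow_pos two_pos _)] at habs
    nlinarith [h2pow n, abs_nonneg (x - (n:ℝ))]
  set s : ℝ → Finset ℤ := fun x => {⌊x⌋ - 1, ⌊x⌋, ⌊x⌋ + 1} with hsdef
  have hzero' : ∀ x : ℝ, ∀ n ∉ s x, g n x = 0 := by
    intro x n hn
    by_contra h
    have h1 : |x - (n:ℝ)| ≤ 1 := hsupp' n x h
    have h2 : (n:ℝ) ≤ x + 1 := by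
      have := abs_le.1 h1; linarith [this.1]
    have h3 : x - 1 ≤ (n:ℝ) := by
      have := abs_le.1 h1; linarith [this.2]
    have hf1 : (⌊x⌋:ℝ) ≤ x := Int.floor_le x
    have hf2 : x < (⌊x⌋:ℝ) + 1 := Int.lt_floor_add_one x
    have hn1 : (n:ℝ) < (⌊x⌋:ℝ) + 2 := by linarith
    have hn2 : (⌊x⌋:ℝ) - 2 < (n:ℝ) := by linarith
    have hn1' : n < ⌊x⌋ + 2 := by exact_mod_cast (by push_cast; linarith : (n:ℝ) < ((⌊x⌋ + 2 : ℤ) : ℝ))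
    have hn2' : ⌊x⌋ - 2 < n := by exact_mod_cast (by push_cast; linarith : ((⌊x⌋ - 2 : ℤ) : ℝ) < (n:ℝ))
    apply hn
    simp only [hsdef, Finset.mem_insert, Finset.mem_singleton]
    omega
  have hsummable : ∀ x : ℝ, Summable fun n => g n x := fun x =>
    summable_of_ne_finset_zero (s := s x) (hzero' x)
  have hcomb_eq : ∀ x, comb ρ₀ x = ∑ n ∈ s x, g n x := fun x => tsum_eq_sum (hzero' x)
  have hcomb_nonneg : ∀ x, 0 ≤ comb ρ₀ x := fun x =>
    tsum_nonneg fun n => hnonneg _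
  have hcard : ∀ x : ℝ, (s x).card ≤ 3 := by
    intro x
    refine le_trans (Finset.card_insert_le _ _) ?_
    have h := Finset.card_insert_le (⌊x⌋) ({⌊x⌋ + 1} : Finset ℤ)
    simp only [Finset.card_singleton] at h
    omega
  have hcomb_le : ∀ x, comb ρ₀ x ≤ 3 := by
    intro x
    rw [hcomb_eq x]
    calc ∑ n ∈ s x, g n x ≤ ∑ n ∈ s x, (1:ℝ) := Finset.sum_le_sum fun n _ => hle1 _
      _ = (s x).card := by simp
      _ ≤ 3 := by exact_mod_cast hcard x
  -- measurability
  have hρm : Measurable ρ₀ := hsmooth.continuous.measurable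
  have hgm : ∀ n, Measurable (g n) := by
    intro n
    exact hρm.comp ((measurable_id.sub_const _).const_mul _)
  have hcm : Measurable (comb ρ₀) := by
    set e : ℕ ≃ ℤ := (Denumerable.eqv ℤ).symm with he
    apply measurable_of_tendsto_metrizable
      (f := fun N x => ∑ i ∈ Finset.range N, g (e i) x)
      (fun N => Finset.measurable_sum _ fun i _ => hgm (e i))
    rw [tendsto_pi_nhds]
    intro x
    have hs : HasSum (fun n : ℤ => g n x) (comb ρ₀ x) := (hsummable x).hasSum
    exact ((e.hasSum_iff).2 hs).tendsto_sum_nat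
  -- integrability of each g n and its integral
  have hρ_int : Integrable ρ₀ := hsmooth.continuous.integrable_of_hasCompactSupport hcpt
  have hg_int : ∀ n, Integrable (g n) := by
    intro n
    have h1 : Integrable (fun x => ρ₀ ((2:ℝ) ^ n.natAbs * x)) :=
      hρ_int.comp_mul_left' (by positivity)
    have h2 := h1.comp_sub_right (μ := volume) ((n:ℤ) : ℝ)
    simpa [hgdef] using h2
  have hg_integral : ∀ n, ∫ x, g n x = ((1:ℝ)/2) ^ n.natAbs := by
    intro n
    have h1 : ∫ x, g n x = ∫ x, ρ₀ ((2:ℝ) ^ n.natAbs * x) := by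
      simpa using integral_sub_right_eq_self (μ := volume)
        (fun x => ρ₀ ((2:ℝ) ^ n.natAbs * x)) ((n:ℤ) : ℝ)
    rw [h1, MeasureTheory.Measure.integral_comp_mul_left ρ₀ ((2:ℝ) ^ n.natAbs), hint]
    rw [abs_of_pos (by positivity), smul_eq_mul, mul_one, ← inv_pow]
    norm_num
  have hnorm_eq : ∀ n, (fun x => ‖g n x‖) = g n := by
    intro n; funext x; exact Real.norm_of_nonneg (hnonneg _)
  have hnorm_int : ∀ n, ∫ x, ‖g n x‖ = ((1:ℝ)/2) ^ n.natAbs := by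
    intro n; rw [hnorm_eq n]; exact hg_integral n
  -- sum of (1/2)^natAbs over ℤ is 3
  have hsum3 : HasSum (fun n : ℤ => ((1:ℝ)/2) ^ n.natAbs) 3 := by
    have hgeo : HasSum (fun n : ℕ => ((1:ℝ)/2) ^ n) 2 := by
      have h := hasSum_geometric_of_lt_one (r := (1:ℝ)/2) (by norm_num) (by norm_num)
      have h2 : ((1:ℝ) - 1/2)⁻¹ = 2 := by norm_num
      rwa [h2] at h
    have hpos : HasSum (fun n : ℕ => ((1:ℝ)/2) ^ ((n:ℤ)).natAbs) 2 := by
      simpa using hgeo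
    have hneg : HasSum (fun n : ℕ => ((1:ℝ)/2) ^ ((-(n + 1) : ℤ)).natAbs) 1 := by
      have h1 : (fun n : ℕ => ((1:ℝ)/2) ^ ((-(n + 1) : ℤ)).natAbs)
          = fun n : ℕ => (1/2 : ℝ) * ((1:ℝ)/2) ^ n := by
        funext n
        have : ((-(n + 1) : ℤ)).natAbs = n + 1 := by
          simp [Int.natAbs_neg]
          omega
        rw [this, pow_succ]
        ring
      rw [h1]
      have h2 := hgeo.mul_left (1/2 : ℝ)
      rwa [show (1/2 : ℝ) * 2 = 1 by norm_num] at h2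
    have h3 : HasSum (fun n : ℤ => ((1:ℝ)/2) ^ n.natAbs) (2 + 1) :=
      HasSum.of_nat_of_neg_add_one (f := fun n : ℤ => ((1:ℝ)/2) ^ n.natAbs) hpos hneg
    convert h3 using 1
    norm_num
  have hSumNorm : Summable fun n : ℤ => ∫ x, ‖g n x‖ := by
    have : (fun n : ℤ => ∫ x, ‖g n x‖) = fun n : ℤ => ((1:ℝ)/2) ^ n.natAbs :=
      funext hnorm_int
    rw [this]; exact hsum3.summable
  have hHasSumInt : HasSum (fun n : ℤ => ∫ x, g n x) (∫ x, comb ρ₀ x) := by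
    have := MeasureTheory.hasSum_integral_of_summable_integral_norm hg_int hSumNorm
    exact this
  have hint3 : ∫ x, comb ρ₀ x = 3 := by
    have h1 : HasSum (fun n : ℤ => ∫ x, g n x) 3 := by
      have : (fun n : ℤ => ∫ x, g n x) = fun n : ℤ => ((1:ℝ)/2) ^ n.natAbs :=
        funext hg_integral
      rw [this]; exact hsum3
    exact (hHasSumInt.unique h1)
  -- integrability of comb
  have hcomb_int : Integrable (comb ρ₀) := by
    refine ⟨hcm.aestronglyMeasurable, ?_⟩
    have hsumnn : ∀ x : ℝ, Summable fun n : ℤ => ‖g n x‖₊ := by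
      intro x
      apply summable_of_ne_finset_zero (s := s x)
      intro n hn
      simp [hzero' x n hn]
    have hpt : ∀ x : ℝ, (‖comb ρ₀ x‖₊ : ℝ≥0∞) ≤ ∑' n : ℤ, (‖g n x‖₊ : ℝ≥0∞) := by
      intro x
      have h1 : ‖comb ρ₀ x‖₊ ≤ ∑' n : ℤ, ‖g n x‖₊ := nnnorm_tsum_le (hsumnn x)
      calc (‖comb ρ₀ x‖₊ : ℝ≥0∞) ≤ ↑(∑' n : ℤ, ‖g n x‖₊) :=
            ENNReal.coe_le_coe.2 h1
        _ = ∑' n : ℤ, (‖g n x‖₊ : ℝ≥0∞) := ENNReal.coe_tsum (hsumnn x)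
    rw [HasFiniteIntegral]
    calc ∫⁻ x, (‖comb ρ₀ x‖₊ : ℝ≥0∞) ≤ ∫⁻ x, ∑' n : ℤ, (‖g n x‖₊ : ℝ≥0∞) :=
          lintegral_mono hpt
      _ = ∑' n : ℤ, ∫⁻ x, (‖g n x‖₊ : ℝ≥0∞) :=
          lintegral_tsum fun n => (hgm n).nnnorm.coe_nnreal_ennreal.aemeasurable
      _ = ∑' n : ℤ, ENNReal.ofReal (((1:ℝ)/2) ^ n.natAbs) := by
          congr 1; funext n
          show ∫⁻ x, ‖g n x‖ₑ = _
          rw [← MeasureTheory.ofReal_integral_norm_eq_lintegral_enorm (hg_int n), hnorm_int n]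
      _ = ENNReal.ofReal 3 := by
          rw [← ENNReal.ofReal_tsum_of_nonneg (fun n => by positivity) hsum3.summable,
            hsum3.tsum_eq]
      _ < ⊤ := ENNReal.ofReal_lt_top
  refine ⟨⟨hcomb_int, hint3⟩, ?_⟩
  -- part (b)
  intro f hf hf0 φ hφ hφc
  obtain ⟨M, hM⟩ := hφ.bounded_above_of_compact_support hφc
  have hM0 : 0 ≤ M := le_trans (norm_nonneg _) (hM 0)
  have hd : Continuous (deriv f) := hf.continuous_deriv le_rfl
  obtain ⟨C, hC⟩ := (isCompact_Icc (a := (0:ℝ)) (b := 3)).exists_bound_of_continuousOn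
    hd.continuousOn
  have hC0 : 0 ≤ C := le_trans (norm_nonneg _) (hC 0 (by norm_num))
  have hfy : ∀ y ∈ Icc (0:ℝ) 3, |f y| ≤ C * y := by
    intro y hy
    have hder : ∀ x ∈ Icc (0:ℝ) 3, HasDerivWithinAt f (deriv f x) (Icc (0:ℝ) 3) x :=
      fun x _ => ((hf.differentiable one_ne_zero) x).hasDerivAt.hasDerivWithinAt
    have := norm_image_sub_le_of_norm_deriv_le_segment' hder
      (fun x hx => hC x (Ico_subset_Icc_self hx)) y hy
    simpa [hf0, Real.norm_eq_abs] using this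
  have key : ∀ ε ∈ Ioi (0:ℝ), ‖∫ x, f (comb ρ₀ (x / ε)) * φ x‖ ≤ C * M * 3 * ε := by
    intro ε hε
    have hε0 : (0:ℝ) < ε := hε
    have hcomb_ε : Integrable (fun x => comb ρ₀ (x / ε)) := hcomb_int.comp_div hε0.ne'
    have hbound_int : Integrable (fun x => (C * M) * comb ρ₀ (x / ε)) := hcomb_ε.const_mul _
    have hptwise : ∀ x, ‖f (comb ρ₀ (x / ε)) * φ x‖ ≤ (C * M) * comb ρ₀ (x / ε) := by
      intro x
      rw [norm_mul]
      have h1 : ‖f (comb ρ₀ (x / ε))‖ ≤ C * comb ρ₀ (x / ε) := by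
        have := hfy _ ⟨hcomb_nonneg (x / ε), hcomb_le (x / ε)⟩
        simpa [Real.norm_eq_abs] using this
      calc ‖f (comb ρ₀ (x / ε))‖ * ‖φ x‖ ≤ (C * comb ρ₀ (x / ε)) * M :=
            mul_le_mul h1 (hM x) (norm_nonneg _) (mul_nonneg hC0 (hcomb_nonneg _))
        _ = (C * M) * comb ρ₀ (x / ε) := by ring
    have hnorm := norm_integral_le_of_norm_le hbound_int
      (Eventually.of_forall hptwise)
    have hval : ∫ x, (C * M) * comb ρ₀ (x / ε) = C * M * 3 * ε := by
      rw [MeasureTheory.integral_const_mul, MeasureTheory.Measure.integral_comp_div (comb ρ₀) ε,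
        hint3, abs_of_pos hε0, smul_eq_mul]
      ring
    rw [hval] at hnorm
    exact hnorm
  have hlim : Tendsto (fun ε : ℝ => C * M * 3 * ε) (nhdsWithin 0 (Ioi (0:ℝ))) (nhds 0) := by
    have h1 : Tendsto (fun ε : ℝ => C * M * 3 * ε) (nhds 0) (nhds (C * M * 3 * 0)) :=
      (tendsto_id (α := ℝ)).const_mul _ |>.mono_left le_rfl
    simpa using h1.mono_left nhdsWithin_le_nhds
  exact squeeze_zero_norm' (eventually_nhdsWithin_of_forall key) hlim
end

section
/- Let (X, d) be a metric space and for each ε ∈ (0,1] let Φ^ε : ℝ × X → X be a map such that: each map p ↦ Φ^ε(t, p) is continuous; the family has the flow property, i.e., Φ^ε(s + t, p) = Φ^ε(s, Φ^ε(t, p)) for all s, t ∈ ℝ, p ∈ X, ε ∈ (0,1]; the family is c-bounded, i.e., for every t ∈ ℝ and every compact C ⊆ X there exist ε₀ ∈ (0,1] and a compact K ⊆ X with Φ^ε(t, p) ∈ K for all p ∈ C and all ε < ε₀; and there is a map Ψ : ℝ × X → X such that for every t ∈ ℝ and every compact K ⊆ X, sup_{p ∈ K} d(Φ^ε(t, p),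 Ψ(t, p)) → 0 as ε → 0⁺. Then Ψ has the flow property: Ψ(s + t, p) = Ψ(s, Ψ(t, p)) for all s, t ∈ ℝ and p ∈ X, and each map p ↦ Ψ(t, p) is continuous. -/
open Set Filter

/-- Theorem 6.3 (ii) in metric form: a c-bounded net of continuous flows
converging locally uniformly to `Ψ(t,·)` for each `t` has a limit `Ψ` that is
continuous in the space variable and satisfies the flow property. -/
theorem stmt_12 {X : Type*} [MetricSpace X]
    (Φ : ℝ → ℝ → X → X) (Ψ : ℝ → X → X)
    (hcont : ∀ ε ∈ Ioc (0:ℝ) 1, ∀ t : ℝ, Continuous (Φ ε t))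
    (hflow : ∀ ε ∈ Ioc (0:ℝ) 1, ∀ (s t : ℝ) (p : X),
      Φ ε (s + t) p = Φ ε s (Φ ε t p))
    (hcb : ∀ t : ℝ, ∀ C : Set X, IsCompact C →
      ∃ ε₀ ∈ Ioc (0:ℝ) 1, ∃ K : Set X, IsCompact K ∧
        ∀ ε ∈ Ioc (0:ℝ) 1, ε < ε₀ → ∀ p ∈ C, Φ ε t p ∈ K)
    (hconv : ∀ t : ℝ, ∀ K : Set X, IsCompact K → ∀ δ > (0:ℝ),
      ∃ ε₀ ∈ Ioc (0:ℝ) 1, ∀ ε ∈ Ioc (0:ℝ) 1, ε < ε₀ →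
        ∀ p ∈ K, dist (Φ ε t p) (Ψ t p) < δ) :
    (∀ (s t : ℝ) (p : X), Ψ (s + t) p = Ψ s (Ψ t p)) ∧
    (∀ t : ℝ, Continuous (Ψ t)) := by
  -- Continuity of Ψ t
  have hΨcont : ∀ t : ℝ, Continuous (Ψ t) := by
    intro t
    rw [continuous_iff_seqContinuous]
    intro u p hu
    rw [Metric.tendsto_atTop]
    intro δ hδ
    have hK : IsCompact (insert p (Set.range u)) := hu.isCompact_insert_range
    obtain ⟨ε₀, hε₀, hε₀'⟩ := hconv t _ hK (δ/3) (by linarith)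
    set ε := ε₀ / 2 with hεdef
    have hεmem : ε ∈ Ioc (0:ℝ) 1 := ⟨by linarith [hε₀.1], by linarith [hε₀.2, hε₀.1]⟩
    have hεlt : ε < ε₀ := by linarith [hε₀.1]
    have hclose := hε₀' ε hεmem hεlt
    have hΦc := hcont ε hεmem t
    have htend : Tendsto (fun n => Φ ε t (u n)) atTop (nhds (Φ ε t p)) :=
      (hΦc.tendsto p).comp hu
    rw [Metric.tendsto_atTop] at htend
    obtain ⟨N, hN⟩ := htend (δ/3) (by linarith)
    refine ⟨N, fun n hn => ?_⟩
    show dist (Ψ t (u n)) (Ψ t p) < δ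
    have h1 : dist (Φ ε t (u n)) (Ψ t (u n)) < δ/3 :=
      hclose (u n) (Or.inr ⟨n, rfl⟩)
    have h2 : dist (Φ ε t (u n)) (Φ ε t p) < δ/3 := hN n hn
    have h3 : dist (Φ ε t p) (Ψ t p) < δ/3 := hclose p (Or.inl rfl)
    calc dist (Ψ t (u n)) (Ψ t p)
        ≤ dist (Ψ t (u n)) (Φ ε t (u n)) + dist (Φ ε t (u n)) (Φ ε t p)
            + dist (Φ ε t p) (Ψ t p) := dist_triangle4 _ _ _ _
      _ < δ/3 + δ/3 + δ/3 := by rw [dist_comm (Ψ t (u n))]; linarith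
      _ = δ := by ring
  refine ⟨?_, hΨcont⟩
  intro s t p
  have key : ∀ δ > (0:ℝ), dist (Ψ (s + t) p) (Ψ s (Ψ t p)) < δ := by
    intro δ hδ
    -- c-boundedness at time t for the compact {p}
    obtain ⟨ε₁, hε₁, K, hKc, hKmem⟩ := hcb t {p} isCompact_singleton
    -- convergence at time s + t on {p}
    obtain ⟨ε₄, hε₄, hconv₄⟩ := hconv (s + t) {p} isCompact_singleton (δ/3) (by linarith)
    -- convergence at time s on K
    obtain ⟨ε₂, hε₂, hconv₂⟩ := hconv s K hKc (δ/3) (by linarith)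
    -- continuity of Ψ s at Ψ t p
    obtain ⟨η, hη, hηball⟩ := Metric.continuous_iff.mp (hΨcont s) (Ψ t p) (δ/3) (by linarith)
    -- convergence at time t on {p} within η
    obtain ⟨ε₃, hε₃, hconv₃⟩ := hconv t {p} isCompact_singleton η hη
    set ε := min ε₁ (min ε₂ (min ε₃ ε₄)) / 2 with hεdef
    have hpos : 0 < min ε₁ (min ε₂ (min ε₃ ε₄)) := by
      simp only [lt_min_iff]
      exact ⟨hε₁.1, hε₂.1, hε₃.1, hε₄.1⟩
    have hle1 : min ε₁ (min ε₂ (min ε₃ ε₄)) ≤ ε₁ := min_le_left _ _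
    have hεmem : ε ∈ Ioc (0:ℝ) 1 :=
      ⟨by positivity, by linarith [hε₁.2]⟩
    have hlt₁ : ε < ε₁ := lt_of_lt_of_le (by linarith) hle1
    have hlt₂ : ε < ε₂ := lt_of_lt_of_le (by linarith)
      (le_trans (min_le_right _ _) (min_le_left _ _))
    have hlt₃ : ε < ε₃ := lt_of_lt_of_le (by linarith)
      (le_trans (min_le_right _ _) (le_trans (min_le_right _ _) (min_le_left _ _)))
    have hlt₄ : ε < ε₄ := lt_of_lt_of_le (by linarith)
      (le_trans (min_le_right _ _) (le_trans (min_le_right _ _) (min_le_right _ _)))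
    have hmemK : Φ ε t p ∈ K := hKmem ε hεmem hlt₁ p rfl
    have hA : dist (Φ ε (s + t) p) (Ψ (s + t) p) < δ/3 :=
      hconv₄ ε hεmem hlt₄ p rfl
    have hB : dist (Φ ε s (Φ ε t p)) (Ψ s (Φ ε t p)) < δ/3 :=
      hconv₂ ε hεmem hlt₂ _ hmemK
    have hη' : dist (Φ ε t p) (Ψ t p) < η := hconv₃ ε hεmem hlt₃ p rfl
    have hC : dist (Ψ s (Φ ε t p)) (Ψ s (Ψ t p)) < δ/3 := hηball _ hη'
    have hfl : Φ ε (s + t) p = Φ ε s (Φ ε t p) := hflow ε hεmem s t p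
    calc dist (Ψ (s + t) p) (Ψ s (Ψ t p))
        ≤ dist (Ψ (s + t) p) (Φ ε (s + t) p) + dist (Φ ε s (Φ ε t p)) (Ψ s (Φ ε t p))
            + dist (Ψ s (Φ ε t p)) (Ψ s (Ψ t p)) := by
          rw [hfl]; exact dist_triangle4 _ _ _ _
      _ < δ/3 + δ/3 + δ/3 := by rw [dist_comm (Ψ (s+t) p)]; linarith
      _ = δ := by ring
  by_contra h
  have : 0 < dist (Ψ (s + t) p) (Ψ s (Ψ t p)) := dist_pos.mpr h
  exact absurd (key _ this) (lt_irrefl _)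
end

section
/- Let (X, d) be a metric space and for each ε ∈ (0,1] let Φ^ε : ℝ × X → X be a map such that: the family has the flow property, i.e., Φ^ε(s + t, p) = Φ^ε(s, Φ^ε(t, p)) for all s, t ∈ ℝ, p ∈ X, ε ∈ (0,1]; the family is c-bounded, i.e., for every t ∈ ℝ and every compact C ⊆ X there exist ε₀ ∈ (0,1] and a compact K ⊆ X with Φ^ε(t, p) ∈ K for all p ∈ C and all ε < ε₀; for every s ∈ ℝ and every compact K ⊆ X there exist C > 0 and N ∈ ℕ such that d(Φ^ε(s, q), Φ^ε(s, q')) ≤ C ε^{−N} d(q, q') for all q, q' ∈ K and all ε ∈ (0,1]; and there is a map Ψ : ℝ × X → X such that for every t ∈ ℝ, p ∈ X and m ∈ ℕ there is C_m > 0 with d(Φ^ε(t, p), Ψ(t, p)) ≤ C_m ε^m for all ε ∈ (0,1]. Then Ψ has the flow property: Ψ(s + t, p) = Ψ(s, Ψ(t, p)) for all s, t ∈ ℝ and p ∈ X. -/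
open Set Filter

/-- Theorem 6.3 (i) in metric form: if the regularizing flows `Φ^ε` are
c-bounded, locally Lipschitz with constants growing at most like `ε^{-N}` on
compact sets, and fast-associated with `Ψ(t,·)` (pointwise convergence with
rate `O(ε^m)` for every `m`), then the limiting map `Ψ` has the flow
property. -/
theorem stmt_13 {X : Type*} [MetricSpace X]
    (Φ : ℝ → ℝ → X → X) (Ψ : ℝ → X → X)
    (hflow : ∀ ε ∈ Ioc (0:ℝ) 1, ∀ (s t : ℝ) (p : X),
      Φ ε (s + t) p = Φ ε s (Φ ε t p))
    (hcb : ∀ t : ℝ, ∀ C : Set X, IsCompact C →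
      ∃ ε₀ ∈ Ioc (0:ℝ) 1, ∃ K : Set X, IsCompact K ∧
        ∀ ε ∈ Ioc (0:ℝ) 1, ε < ε₀ → ∀ p ∈ C, Φ ε t p ∈ K)
    (hlip : ∀ s : ℝ, ∀ K : Set X, IsCompact K →
      ∃ C > (0:ℝ), ∃ N : ℕ, ∀ ε ∈ Ioc (0:ℝ) 1, ∀ q ∈ K, ∀ q' ∈ K,
        dist (Φ ε s q) (Φ ε s q') ≤ C * ε ^ (-(N:ℤ)) * dist q q')
    (hfast : ∀ (t : ℝ) (p : X), ∀ m : ℕ, ∃ Cm > (0:ℝ), ∀ ε ∈ Ioc (0:ℝ) 1,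
      dist (Φ ε t p) (Ψ t p) ≤ Cm * ε ^ m) :
    ∀ (s t : ℝ) (p : X), Ψ (s + t) p = Ψ s (Ψ t p) := by
  intro s t p
  obtain ⟨ε₀, hε₀, K, hKc, hK⟩ := hcb t {p} isCompact_singleton
  obtain ⟨C, hC, N, hL⟩ := hlip s (K ∪ {Ψ t p}) (hKc.union isCompact_singleton)
  obtain ⟨C₁, hC₁, h₁⟩ := hfast t p (N + 1)
  obtain ⟨C₂, hC₂, h₂⟩ := hfast (s + t) p 1
  obtain ⟨C₃, hC₃, h₃⟩ := hfast s (Ψ t p) 1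
  set D := dist (Ψ (s + t) p) (Ψ s (Ψ t p)) with hD
  set M := C₂ + C * C₁ + C₃ with hM
  have hMpos : 0 < M := by positivity
  have key : ∀ ε ∈ Ioc (0:ℝ) 1, ε < ε₀ → D ≤ M * ε := by
    intro ε hε hεlt
    have hεpos := hε.1
    have hmid : dist (Φ ε (s + t) p) (Φ ε s (Ψ t p)) ≤ C * C₁ * ε := by
      rw [hflow ε hε s t p]
      have hq : Φ ε t p ∈ K ∪ {Ψ t p} := Or.inl (hK ε hε hεlt p rfl)
      have hq' : Ψ t p ∈ K ∪ {Ψ t p} := Or.inr rfl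
      have hle := hL ε hε _ hq _ hq'
      have hle2 := h₁ ε hε
      have hcanc : ε ^ (-(N:ℤ)) * ε ^ (N + 1) = ε := by
        rw [zpow_neg, zpow_natCast, pow_succ]
        field_simp
      calc dist (Φ ε s (Φ ε t p)) (Φ ε s (Ψ t p))
          ≤ C * ε ^ (-(N:ℤ)) * dist (Φ ε t p) (Ψ t p) := hle
        _ ≤ C * ε ^ (-(N:ℤ)) * (C₁ * ε ^ (N + 1)) := by
            apply mul_le_mul_of_nonneg_left hle2
            positivity
        _ = C * C₁ * (ε ^ (-(N:ℤ)) * ε ^ (N + 1)) := by ring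
        _ = C * C₁ * ε := by rw [hcanc]
    have h1 : dist (Ψ (s + t) p) (Φ ε (s + t) p) ≤ C₂ * ε := by
      rw [dist_comm]
      simpa using h₂ ε hε
    have h3 : dist (Φ ε s (Ψ t p)) (Ψ s (Ψ t p)) ≤ C₃ * ε := by
      simpa using h₃ ε hε
    calc D ≤ dist (Ψ (s + t) p) (Φ ε (s + t) p)
            + dist (Φ ε (s + t) p) (Φ ε s (Ψ t p))
            + dist (Φ ε s (Ψ t p)) (Ψ s (Ψ t p)) := dist_triangle4 _ _ _ _
      _ ≤ C₂ * ε + C * C₁ * ε + C₃ * ε := by gcongr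
      _ = M * ε := by ring
  rw [show (Ψ (s + t) p = Ψ s (Ψ t p)) ↔ D = 0 from (dist_eq_zero).symm]
  by_contra h
  have hDpos : 0 < D := lt_of_le_of_ne dist_nonneg (Ne.symm h)
  set ε := min (ε₀ / 2) (min 1 (D / (2 * M))) with hε
  have hεpos : 0 < ε := by
    apply lt_min (by linarith [hε₀.1]) (lt_min one_pos (by positivity))
  have hεIoc : ε ∈ Ioc (0:ℝ) 1 := ⟨hεpos, (min_le_right _ _).trans (min_le_left _ _)⟩
  have hεlt : ε < ε₀ := (min_le_left _ _).trans_lt (by linarith [hε₀.1])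
  have hεD : ε ≤ D / (2 * M) := (min_le_right _ _).trans (min_le_right _ _)
  have := key ε hεIoc hεlt
  have : D ≤ M * (D / (2 * M)) := this.trans (by
    apply mul_le_mul_of_nonneg_left hεD hMpos.le)
  rw [mul_div_assoc'] at this
  have : D ≤ D / 2 := by
    have : M * D / (2 * M) = D / 2 := by field_simp
    linarith [this ▸ ‹D ≤ M * D / (2 * M)›]
  linarith
end

section
/- Let (X, d) be a metric space and for each ε ∈ (0,1] let Φ^ε : ℝ × X → X be a map such that: each map p ↦ Φ^ε(t, p) is continuous; the family has the flow property, i.e., Φ^ε(s + t, p) = Φ^ε(s, Φ^ε(t, p)) for all s, t ∈ ℝ, p ∈ X, ε ∈ (0,1]; the family is c-bounded, i.e., for every t ∈ ℝ and every compact C ⊆ X there exist ε₀ ∈ (0,1] and a compact K ⊆ X with Φ^ε(t, p) ∈ K for all p ∈ C and all ε < ε₀; for every t ∈ ℝ and every compact K ⊆ X the family of restrictions {Φ^ε(t, ·)|_K : ε ∈ (0,1]} is uniformly equicontinuous; and there is a map Ψ : ℝ × X → X with d(Φ^ε(t, p), Ψ(t, p)) → 0 as ε → 0⁺ for every t ∈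 ℝ and p ∈ X. Then each map p ↦ Ψ(t, p) is continuous and Ψ has the flow property: Ψ(s + t, p) = Ψ(s, Ψ(t, p)) for all s, t ∈ ℝ and p ∈ X. -/
open Set Filter

/-- Corollary 6.4 in metric form: if the regularizing flows are continuous,
c-bounded, locally uniformly equicontinuous and converge pointwise to
`Ψ(t,·)` for each `t`, then (by Arzelà–Ascoli the convergence is locally
uniform and so) `Ψ(t,·)` is continuous and `Ψ` has the flow property. -/
theorem stmt_14 {X : Type*} [MetricSpace X]
    (Φ : ℝ → ℝ → X → X) (Ψ : ℝ → X → X)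
    (hcont : ∀ ε ∈ Ioc (0:ℝ) 1, ∀ t : ℝ, Continuous (Φ ε t))
    (hflow : ∀ ε ∈ Ioc (0:ℝ) 1, ∀ (s t : ℝ) (p : X),
      Φ ε (s + t) p = Φ ε s (Φ ε t p))
    (hcb : ∀ t : ℝ, ∀ C : Set X, IsCompact C →
      ∃ ε₀ ∈ Ioc (0:ℝ) 1, ∃ K : Set X, IsCompact K ∧
        ∀ ε ∈ Ioc (0:ℝ) 1, ε < ε₀ → ∀ p ∈ C, Φ ε t p ∈ K)
    (hequi : ∀ t : ℝ, ∀ K : Set X, IsCompact K → ∀ δ > (0:ℝ), ∃ η > (0:ℝ),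
      ∀ ε ∈ Ioc (0:ℝ) 1, ∀ p ∈ K, ∀ q ∈ K, dist p q < η →
        dist (Φ ε t p) (Φ ε t q) < δ)
    (hconv : ∀ (t : ℝ) (p : X), Tendsto (fun ε => dist (Φ ε t p) (Ψ t p))
      (nhdsWithin 0 (Ioc (0:ℝ) 1)) (nhds 0)) :
    (∀ t : ℝ, Continuous (Ψ t)) ∧
    (∀ (s t : ℝ) (p : X), Ψ (s + t) p = Ψ s (Ψ t p)) := by
  set L := nhdsWithin (0:ℝ) (Ioc (0:ℝ) 1) with hL
  haveI hne : L.NeBot := by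
    rw [hL, ← mem_closure_iff_nhdsWithin_neBot, closure_Ioc (by norm_num : (0:ℝ) ≠ 1)]
    exact ⟨le_refl 0, by norm_num⟩
  have hmem : ∀ᶠ ε in L, ε ∈ Ioc (0:ℝ) 1 := eventually_mem_nhdsWithin
  have hΦtend : ∀ (t : ℝ) (p : X), Tendsto (fun ε => Φ ε t p) L (nhds (Ψ t p)) := by
    intro t p
    exact tendsto_iff_dist_tendsto_zero.mpr (hconv t p)
  constructor
  · -- continuity via sequential continuity
    intro t
    apply SeqContinuous.continuous
    intro x p hx
    rw [Metric.tendsto_atTop]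
    intro δ hδ
    have hK : IsCompact (insert p (Set.range x)) := hx.isCompact_insert_range
    obtain ⟨η, hη, hηprop⟩ := hequi t _ hK (δ/2) (by linarith)
    have hxd : ∀ᶠ n in atTop, dist (x n) p < η := by
      obtain ⟨N, hN⟩ := Metric.tendsto_atTop.mp hx η hη
      exact eventually_atTop.mpr ⟨N, hN⟩
    obtain ⟨N, hN⟩ := eventually_atTop.mp hxd
    refine ⟨N, fun n hn => ?_⟩
    have hn := hN n hn
    have key : dist (Ψ t (x n)) (Ψ t p) ≤ δ/2 := by
      refine le_of_tendsto ((hΦtend t (x n)).dist (hΦtend t p)) ?_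
      filter_upwards [hmem] with ε hε
      exact le_of_lt (hηprop ε hε (x n) (Or.inr ⟨n, rfl⟩) p (Or.inl rfl) hn)
    calc dist ((Ψ t ∘ x) n) (Ψ t p) ≤ δ/2 := key
      _ < δ := by linarith
  · -- flow property
    intro s t p
    obtain ⟨ε₀, hε₀, K, hK, hKmem⟩ := hcb t {p} isCompact_singleton
    have hsmall : ∀ᶠ ε in L, ε < ε₀ :=
      eventually_nhdsWithin_of_eventually_nhds (eventually_lt_nhds hε₀.1)
    have hinK : ∀ᶠ ε in L, Φ ε t p ∈ K := by
      filter_upwards [hmem, hsmall] with ε h1 h2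
      exact hKmem ε h1 h2 p rfl
    have hΨK : Ψ t p ∈ K := hK.isClosed.mem_of_tendsto (hΦtend t p) hinK
    refine tendsto_nhds_unique (hΦtend (s+t) p) ?_
    rw [Metric.tendsto_nhds]
    intro δ hδ
    obtain ⟨η, hη, hηprop⟩ := hequi s K hK (δ/2) (by linarith)
    have h1 : ∀ᶠ ε in L, dist (Φ ε t p) (Ψ t p) < η :=
      (hconv t p).eventually (eventually_lt_nhds hη) |>.mono (by
        intro ε h; simpa using h)
    have h2 : ∀ᶠ ε in L, dist (Φ ε s (Ψ t p)) (Ψ s (Ψ t p)) < δ/2 :=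
      (hconv s (Ψ t p)).eventually (eventually_lt_nhds (by linarith : (0:ℝ) < δ/2)) |>.mono (by
        intro ε h; simpa using h)
    filter_upwards [hmem, hinK, h1, h2] with ε hε hK1 hd1 hd2
    rw [hflow ε hε s t p]
    calc dist (Φ ε s (Φ ε t p)) (Ψ s (Ψ t p))
        ≤ dist (Φ ε s (Φ ε t p)) (Φ ε s (Ψ t p)) + dist (Φ ε s (Ψ t p)) (Ψ s (Ψ t p)) :=
          dist_triangle _ _ _
      _ < δ/2 + δ/2 := add_lt_add (hηprop ε hε _ hK1 _ hΨK hd1) hd2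
      _ = δ := by ring
end

section
/- Fix a mollifier ρ ∈ C_c^∞(ℝ) with ρ ≥ 0, supp ρ ⊆ [−1,1] and ∫ρ = 1; let σ : (0,1] → (0,∞) satisfy σ(ε) → 0 as ε → 0⁺, and set ρ_{σ(ε)}(x) = σ(ε)^{-1} ρ(x/σ(ε)). For ε ∈ (0,1] define Φ^ε : ℝ × ℝ² → ℝ² by Φ^ε(t, (α, β)) = (α + t, β + t − ∫_α^{α+t} ρ_{σ(ε)}(γ) dγ). Then: (a) Φ^ε(0, (α,β)) = (α,β), ∂_t Φ^ε(t, (α,β)) = (1, 1 − ρ_{σ(ε)}(α + t)) (so Φ^ε is the flow of the vector field ξ_ε(α,β) = (1, 1 − ρ_{σ(ε)}(α))), and Φ^ε(s + t, ·) = Φ^ε(s, Φ^ε(t, ·)) for all s, t ∈ ℝ; (b) for every (α, β) ∈ ℝ² and t ∈ ℝ with α ≠ 0 and α + t ≠ 0 there exists ε₀ ∈ (0,1] such that for all ε < ε₀, Φ^ε(t, (α, β)) = (α + t, β + t − H(α + t) + H(α)), where H is the indicator function of [0, ∞). In particular Φ^ε(t, ·) converges pointwise (away from the lines α = 0 and α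 + t = 0) to the discontinuous map Ψ(t, (α, β)) = (α + t, β + t − H(α + t) + H(α)). -/
open Set Filter intervalIntegral

/-- The explicit flow (38) of Example 6.5, written on the universal cover ℝ²
of the torus: `Φ^ε(t,(α,β)) = (α + t, β + t − ∫_α^{α+t} ρ_{σ(ε)}(γ) dγ)`. -/
noncomputable def PhiFlow (ρ σ : ℝ → ℝ) (ε t : ℝ) (p : ℝ × ℝ) : ℝ × ℝ :=
  (p.1 + t, p.2 + t - ∫ γ in p.1..(p.1 + t), (σ ε)⁻¹ * ρ (γ / σ ε))

lemma int_zero_of_gt_one {ρ : ℝ → ℝ} (hρsupp : Function.support ρ ⊆ Icc (-1) 1)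
    {a b : ℝ} (ha : 1 < a) (hb : 1 < b) : ∫ x in a..b, ρ x = 0 := by
  have h : EqOn ρ (fun _ => (0:ℝ)) (uIcc a b) := by
    intro x hx
    by_contra h
    have := hρsupp h
    have : x ≤ 1 := this.2
    have hmin : min a b ≤ x := hx.1
    have : 1 < min a b := lt_min ha hb
    linarith
  rw [intervalIntegral.integral_congr h, intervalIntegral.integral_const, smul_zero]

lemma int_zero_of_lt_neg_one {ρ : ℝ → ℝ} (hρsupp : Function.support ρ ⊆ Icc (-1) 1)
    {a b : ℝ} (ha : a < -1) (hb : b < -1) : ∫ x in a..b, ρ x = 0 := by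
  have h : EqOn ρ (fun _ => (0:ℝ)) (uIcc a b) := by
    intro x hx
    by_contra h
    have := hρsupp h
    have : -1 ≤ x := this.1
    have hmax : x ≤ max a b := hx.2
    have : max a b < -1 := max_lt ha hb
    linarith
  rw [intervalIntegral.integral_congr h, intervalIntegral.integral_const, smul_zero]

lemma int_one_of {ρ : ℝ → ℝ} (hρsupp : Function.support ρ ⊆ Icc (-1) 1)
    (hρint : ∫ x, ρ x = 1) {a b : ℝ} (ha : a < -1) (hb : 1 < b) :
    ∫ x in a..b, ρ x = 1 := by
  rw [intervalIntegral.integral_eq_integral_of_support_subset, hρint]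
  refine hρsupp.trans ?_
  intro x hx
  exact ⟨lt_of_lt_of_le ha hx.1, hx.2.trans hb.le⟩

/-- Example 6.5 (on the universal cover ℝ² of `T²`): (a) `Φ^ε` is the smooth
global flow of the vector field `ξ_ε(α,β) = (1, 1 − ρ_{σ(ε)}(α))`, i.e. it
fixes points at `t = 0`, solves the ODE and has the flow property; and
(b) away from the lines `α = 0` and `α + t = 0` the flows are eventually
equal (as `ε → 0⁺`) to the discontinuous limiting flow
`Ψ(t,(α,β)) = (α + t, β + t − H(α+t) + H(α))`, `H` being the indicator
function of `[0,∞)`. -/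
theorem stmt_15 (ρ σ : ℝ → ℝ)
    (hρsmooth : ContDiff ℝ (⊤ : ℕ∞) ρ) (hρcpt : HasCompactSupport ρ)
    (hρnonneg : ∀ x, 0 ≤ ρ x) (hρsupp : Function.support ρ ⊆ Icc (-1) 1)
    (hρint : ∫ x, ρ x = 1)
    (hσpos : ∀ ε ∈ Ioc (0:ℝ) 1, 0 < σ ε)
    (hσ0 : Tendsto σ (nhdsWithin 0 (Ioc (0:ℝ) 1)) (nhds 0)) :
    (∀ ε ∈ Ioc (0:ℝ) 1,
      (∀ p : ℝ × ℝ, PhiFlow ρ σ ε 0 p = p) ∧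
      (∀ (t : ℝ) (p : ℝ × ℝ), HasDerivAt (fun s => PhiFlow ρ σ ε s p)
        (1, 1 - (σ ε)⁻¹ * ρ ((p.1 + t) / σ ε)) t) ∧
      (∀ (s t : ℝ) (p : ℝ × ℝ),
        PhiFlow ρ σ ε (s + t) p = PhiFlow ρ σ ε s (PhiFlow ρ σ ε t p))) ∧
    (∀ (α β t : ℝ), α ≠ 0 → α + t ≠ 0 →
      ∃ ε₀ ∈ Ioc (0:ℝ) 1, ∀ ε ∈ Ioc (0:ℝ) 1, ε < ε₀ →
        PhiFlow ρ σ ε t (α, β) =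
          (α + t, β + t - (if 0 ≤ α + t then (1:ℝ) else 0)
            + (if 0 ≤ α then (1:ℝ) else 0))) := by
  constructor
  · intro ε hε
    set f : ℝ → ℝ := fun γ => (σ ε)⁻¹ * ρ (γ / σ ε) with hf
    have hfc : Continuous f := by
      exact continuous_const.mul (hρsmooth.continuous.comp (continuous_id.div_const _))
    refine ⟨?_, ?_, ?_⟩
    · intro p
      simp [PhiFlow]
    · intro t p
      have hg : HasDerivAt (fun u => ∫ γ in p.1..u, f γ) (f (p.1 + t)) (p.1 + t) :=
        intervalIntegral.integral_hasDerivAt_right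
          (hfc.intervalIntegrable _ _)
          hfc.aestronglyMeasurable.stronglyMeasurableAtFilter
          hfc.continuousAt
      have hlin : HasDerivAt (fun s : ℝ => p.1 + s) 1 t := (hasDerivAt_id t).const_add p.1
      have h2 : HasDerivAt (fun s : ℝ => ∫ γ in p.1..(p.1 + s), f γ) (f (p.1 + t)) t := by
        have := hg.comp t hlin
        rw [mul_one] at this
        exact this
      have h1 : HasDerivAt (fun s : ℝ => p.1 + s) 1 t := hlin
      have h3 : HasDerivAt (fun s : ℝ => p.2 + s - ∫ γ in p.1..(p.1 + s), f γ)
          (1 - f (p.1 + t)) t := ((hasDerivAt_id t).const_add p.2).sub h2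
      exact h1.prodMk h3
    · intro s t p
      have hadj : (∫ γ in p.1..(p.1 + t), f γ) + ∫ γ in (p.1 + t)..(p.1 + t + s), f γ
          = ∫ γ in p.1..(p.1 + t + s), f γ :=
        intervalIntegral.integral_add_adjacent_intervals
          (hfc.intervalIntegrable _ _) (hfc.intervalIntegrable _ _)
      simp only [PhiFlow, Prod.mk.injEq]
      constructor
      · ring
      · have : p.1 + (s + t) = p.1 + t + s := by ring
        rw [this, ← hadj]
        ring
  · intro α β t hα hαt
    have hδ : (0:ℝ) < min |α| |α + t| :=
      lt_min (abs_pos.mpr hα) (abs_pos.mpr hαt)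
    have hev : ∀ᶠ ε in nhdsWithin 0 (Ioc (0:ℝ) 1), dist (σ ε) 0 < min |α| |α + t| :=
      Metric.tendsto_nhds.mp hσ0 _ hδ
    rw [eventually_nhdsWithin_iff] at hev
    rcases Metric.eventually_nhds_iff.mp hev with ⟨r, hr, hball⟩
    refine ⟨min r 1, ⟨lt_min hr one_pos, min_le_right _ _⟩, ?_⟩
    intro ε hεmem hεlt
    have hεr : dist ε 0 < r := by
      rw [Real.dist_eq, sub_zero, abs_of_pos hεmem.1]
      exact hεlt.trans_le (min_le_left _ _)
    have hσlt : σ ε < min |α| |α + t| := by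
      have := hball hεr hεmem
      rwa [Real.dist_eq, sub_zero, abs_of_pos (hσpos ε hεmem)] at this
    set s := σ ε with hs
    have hspos : 0 < s := hσpos ε hεmem
    have hsα : s < |α| := hσlt.trans_le (min_le_left _ _)
    have hsαt : s < |α + t| := hσlt.trans_le (min_le_right _ _)
    have hkey : (∫ γ in α..(α + t), s⁻¹ * ρ (γ / s))
        = (if 0 ≤ α + t then (1:ℝ) else 0) - (if 0 ≤ α then (1:ℝ) else 0) := by
      rw [intervalIntegral.integral_const_mul,
        intervalIntegral.integral_comp_div (f := ρ) hspos.ne', smul_eq_mul,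
        ← mul_assoc, inv_mul_cancel₀ hspos.ne', one_mul]
      rcases lt_or_gt_of_ne hα with hαneg | hαpos
      · have ha : α / s < -1 := by
          rw [div_lt_iff₀ hspos]
          rw [abs_of_neg hαneg] at hsα
          linarith
        rcases lt_or_gt_of_ne hαt with h1 | h1
        · have hb : (α + t) / s < -1 := by
            rw [div_lt_iff₀ hspos]
            rw [abs_of_neg h1] at hsαt
            linarith
          rw [int_zero_of_lt_neg_one hρsupp ha hb]
          rw [if_neg (not_le.mpr h1), if_neg (not_le.mpr hαneg)]
          ring
        · have hb : 1 < (α + t) / s := by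
            rw [lt_div_iff₀ hspos]
            rw [abs_of_pos h1] at hsαt
            linarith
          rw [int_one_of hρsupp hρint ha hb]
          rw [if_pos h1.le, if_neg (not_le.mpr hαneg)]
          ring
      · have ha : 1 < α / s := by
          rw [lt_div_iff₀ hspos]
          rw [abs_of_pos hαpos] at hsα
          linarith
        rcases lt_or_gt_of_ne hαt with h1 | h1
        · have hb : (α + t) / s < -1 := by
            rw [div_lt_iff₀ hspos]
            rw [abs_of_neg h1] at hsαt
            linarith
          rw [intervalIntegral.integral_symm, int_one_of hρsupp hρint hb ha]
          rw [if_neg (not_le.mpr h1), if_pos hαpos.le]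
          ring
        · have hb : 1 < (α + t) / s := by
            rw [lt_div_iff₀ hspos]
            rw [abs_of_pos h1] at hsαt
            linarith
          rw [int_zero_of_gt_one hρsupp ha hb]
          rw [if_pos h1.le, if_pos hαpos.le]
          ring
    simp only [PhiFlow, ← hs, hkey]
    ring_nf
end
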